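/- arXiv:2501.13037 — 6 statements merged into one kernel-verified Lean document; each statement's English description precedes it below -/
import Mathlib

section
/- Let G be a directed acyclic graph over a finite node set V, and let A, B, C be pairwise disjoint subsets of V such that every node of V is an ancestor of A ∪ B ∪ C and A and C are d-separated by B in G. Then there exist sets A⁺ ⊇ A and C⁺ ⊇ C with A⁺ ∩ C⁺ = ∅, A⁺ ∪ B ∪ C⁺ = V, and A⁺ and C⁺ d-separated by B in G. -/
/-- The kind of a step along a path in a mixed graph: a forward directed edge,
a backward directed edge, or a bi-directed edge. -/
inductive StepKind : Type
  | fwd | bwd | bidir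

/-- Whether a step has an arrowhead at its left endpoint. -/
def StepKind.headLeft : StepKind → Prop
  | .fwd => False
  | _ => True

/-- Whether a step has an arrowhead at its right endpoint. -/
def StepKind.headRight : StepKind → Prop
  | .bwd => False
  | _ => True

/-- A directed mixed graph: directed edges `dir` and bi-directed edges `bi`. -/
structure MixedGraph (V : Type*) where
  dir : V → V → Prop
  bi : V → V → Prop

namespace MixedGraph

variable {V : Type*}

/-- Validity of a step of the given kind between `u` (left) and `v` (right). -/
def stepOK (G : MixedGraph V) (u v : V) : StepKind → Prop
  | .fwd => G.dir u v
  | .bwd => G.dir v u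
  | .bidir => G.bi u v

/-- A path in a mixed graph: distinct vertices `verts 0, …, verts n` joined by
edges of the recorded kinds. -/
structure Path (G : MixedGraph V) where
  n : ℕ
  verts : Fin (n + 1) → V
  steps : Fin n → StepKind
  inj : Function.Injective verts
  ok : ∀ i : Fin n, G.stepOK (verts i.castSucc) (verts i.succ) (steps i)

/-- A mixed graph is acyclic if there is no nontrivial directed cycle. -/
def Acyclic (G : MixedGraph V) : Prop := ∀ v, ¬ Relation.TransGen G.dir v v

/-- `v` is a descendant of `u` (every node is its own descendant). -/
def descends (G : MixedGraph V) (u v : V) : Prop := Relation.ReflTransGen G.dir u v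

/-- Ancestors of a set of nodes (via directed edges; each node is its own ancestor). -/
def ancestorsOf (G : MixedGraph V) (S : Set V) : Set V :=
  {u | ∃ s ∈ S, Relation.ReflTransGen G.dir u s}

/-- The interior vertex `verts j` (for `0 < j < n+1`, i.e. `j` regarded in `Fin n`
with `0 < j`) is a collider on the path: both adjacent edges have an arrowhead at it. -/
def IsCollider (G : MixedGraph V) (p : Path G) (j : Fin p.n) (_hj : 0 < j.val) : Prop :=
  (p.steps ⟨j.val - 1, lt_of_le_of_lt (Nat.sub_le _ _) j.isLt⟩).headRight ∧
    (p.steps j).headLeft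

/-- A path is blocked by `B` if some interior non-collider lies in `B`, or some
interior collider has no descendant in `B`. -/
def Blocked (G : MixedGraph V) (p : Path G) (B : Set V) : Prop :=
  ∃ (j : Fin p.n) (hj : 0 < j.val),
    (¬ G.IsCollider p j hj ∧ p.verts j.castSucc ∈ B) ∨
      (G.IsCollider p j hj ∧ ∀ w ∈ B, ¬ G.descends (p.verts j.castSucc) w)

/-- m-separation (d-separation when there are no bi-directed edges): every path
from `A` to `C` is blocked by `B`. -/
def MSep (G : MixedGraph V) (A C B : Set V) : Prop :=
  ∀ p : Path G, p.verts 0 ∈ A → p.verts (Fin.last p.n) ∈ C → G.Blocked p B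

/-- Subgraph induced on a set `W` of vertices. -/
def restrict (G : MixedGraph V) (W : Set V) : MixedGraph V where
  dir u v := G.dir u v ∧ u ∈ W ∧ v ∈ W
  bi u v := G.bi u v ∧ u ∈ W ∧ v ∈ W

/-- Two distinct nodes are collider-connected if some path between them has all
interior nodes colliders (adjacent nodes are collider-connected). This is the
adjacency of the augmented graph. -/
def collConn (G : MixedGraph V) (u v : V) : Prop :=
  u ≠ v ∧ ∃ p : Path G, p.verts 0 = u ∧ p.verts (Fin.last p.n) = v ∧
    ∀ (j : Fin p.n) (hj : 0 < j.val), G.IsCollider p j hj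

end MixedGraph

/-- Separation in an undirected graph with adjacency `adj`: there is no walk from
`A` to `C` avoiding `B`. -/
def USep {V : Type*} (adj : V → V → Prop) (A C B : Set V) : Prop :=
  ∀ a ∈ A, ∀ c ∈ C,
    ¬ Relation.ReflTransGen (fun u v => adj u v ∧ u ∉ B ∧ v ∉ B) a c

namespace StepKind

/-- boolean version of headLeft -/
def hlB : StepKind → Bool
  | .fwd => false
  | _ => true

/-- boolean version of headRight -/
def hrB : StepKind → Bool
  | .bwd => false
  | _ => true

lemma headLeft_iff (k : StepKind) : k.headLeft ↔ k.hlB = true := by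
  cases k <;> simp [headLeft, hlB]

lemma headRight_iff (k : StepKind) : k.headRight ↔ k.hrB = true := by
  cases k <;> simp [headRight, hrB]

end StepKind

namespace MixedGraph

variable {V : Type*} {G : MixedGraph V}

/-- The activation condition at an interior vertex `x` of a walk, where `f` records
whether the incoming edge has an arrowhead at `x` and `k` is the kind of the
outgoing step. -/
def okAt (G : MixedGraph V) (B : Set V) (x : V) (f : Bool) (k : StepKind) : Prop :=
  if f && k.hlB then ∃ b ∈ B, G.descends x b else x ∉ B

/-- Walks in a mixed graph (vertices may repeat). -/
inductive Walk (G : MixedGraph V) : V → V → Type _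
  | nil (v : V) : Walk G v v
  | cons {u v w : V} (k : StepKind) (h : G.stepOK u v k) (t : Walk G v w) : Walk G u w

namespace Walk

def length : {u v : V} → Walk G u v → ℕ
  | _, _, nil _ => 0
  | _, _, cons _ _ t => length t + 1

def append : {u v w : V} → Walk G u v → Walk G v w → Walk G u w
  | _, _, _, nil _, q => q
  | _, _, _, cons k h t, q => cons k h (append t q)

def support : {u v : V} → Walk G u v → List V
  | _, _, nil x => [x]
  | u, _, cons _ _ t => u :: support t

def vertAt : {u v : V} → Walk G u v → ℕ → V
  | _, x, nil _, _ => x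
  | u, _, cons _ _ _, 0 => u
  | _, _, cons _ _ t, (i+1) => vertAt t i

def kindAt : {u v : V} → Walk G u v → ℕ → StepKind
  | _, _, nil _, _ => .fwd
  | _, _, cons k _ _, 0 => k
  | _, _, cons _ _ t, (i+1) => kindAt t i

def headKind : {u v : V} → Walk G u v → Option StepKind
  | _, _, nil _ => none
  | _, _, cons k _ _ => some k

def lastFlag : Bool → {u v : V} → Walk G u v → Bool
  | f, _, _, nil _ => f
  | _, _, _, cons k _ t => lastFlag k.hrB t

/-- Activeness of a walk w.r.t. `B`, with incoming-arrowhead flag `f` at the start: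
every source-of-a-step vertex satisfies `okAt`. (The final vertex gets no condition;
when used with `f = false` the start condition amounts to being outside `B`.) -/
def Active (B : Set V) : Bool → {u v : V} → Walk G u v → Prop
  | _, _, _, nil _ => True
  | f, u, _, @cons _ _ _ _ _ k _ t => G.okAt B u f k ∧ Active B k.hrB t

end Walk

end MixedGraph
namespace MixedGraph

variable {V : Type*} {G : MixedGraph V} {B : Set V}

namespace Walk

lemma length_append : ∀ {u v w : V} (p : Walk G u v) (q : Walk G v w),
    (p.append q).length = p.length + q.length
  | _, _, _, nil _, q => by simp [append, length]
  | _, _, _, cons k h t, q => by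
      simp [append, length, length_append t q]; omega

lemma lastFlag_append : ∀ {u v w : V} (p : Walk G u v) (q : Walk G v w) (f : Bool),
    lastFlag f (p.append q) = lastFlag (lastFlag f p) q
  | _, _, _, nil _, q, f => rfl
  | _, _, _, cons k h t, q, f => lastFlag_append t q k.hrB

lemma active_append : ∀ {u v w : V} (p : Walk G u v) (q : Walk G v w) (f : Bool),
    Active B f (p.append q) ↔ Active B f p ∧ Active B (lastFlag f p) q
  | _, _, _, nil _, q, f => by simp [append, Active, lastFlag]
  | _, _, _, cons k h t, q, f => by
      simp [append, Active, lastFlag, active_append t q k.hrB, and_assoc]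

lemma eq_of_length_zero : ∀ {u v : V} (w : Walk G u v), w.length = 0 → u = v
  | _, _, nil _, _ => rfl
  | _, _, cons _ _ t, h => by simp [length] at h

lemma eq_of_headKind_none : ∀ {u v : V} (w : Walk G u v), w.headKind = none → u = v
  | _, _, nil _, _ => rfl
  | _, _, cons _ _ t, h => by simp [headKind] at h

lemma active_head : ∀ {u v : V} (w : Walk G u v) {f : Bool} {k : StepKind},
    Active B f w → w.headKind = some k → G.okAt B u f k
  | _, _, nil _, _, _, _, hk => by simp [headKind] at hk
  | _, _, cons k' h' t, f, k, ha, hk => by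
      simp [headKind] at hk; exact hk ▸ ha.1

lemma active_changeFlag : ∀ {u v : V} (w : Walk G u v) {f f' : Bool},
    Active B f w → (∀ k, w.headKind = some k → G.okAt B u f' k) → Active B f' w
  | _, _, nil _, _, _, _, _ => trivial
  | _, _, cons k h t, f, f', ha, hok => ⟨hok k rfl, ha.2⟩

lemma vertAt_zero : ∀ {u v : V} (w : Walk G u v), w.vertAt 0 = u
  | _, _, nil _ => rfl
  | _, _, cons _ _ _ => rfl

lemma vertAt_last : ∀ {u v : V} (w : Walk G u v), w.vertAt w.length = v
  | _, _, nil _ => rfl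
  | _, _, cons _ _ t => vertAt_last t

lemma vertAt_mem_support : ∀ {u v : V} (w : Walk G u v) (i : ℕ), i ≤ w.length →
    w.vertAt i ∈ w.support
  | _, _, nil _, i, _ => by simp [vertAt, support]
  | _, _, cons _ _ t, 0, _ => by simp [vertAt, support]
  | _, _, cons _ _ t, (i+1), h => by
      simp only [vertAt, support, List.mem_cons]
      exact Or.inr (vertAt_mem_support t i (by simpa [length] using h))

lemma stepOK_vertAt : ∀ {u v : V} (w : Walk G u v) (i : ℕ), i < w.length →
    G.stepOK (w.vertAt i) (w.vertAt (i+1)) (w.kindAt i)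
  | _, _, nil _, i, h => by simp [length] at h
  | _, _, cons k hk t, 0, h => by
      simpa [vertAt, kindAt, vertAt_zero t] using hk
  | _, _, cons _ _ t, (i+1), h => stepOK_vertAt t i (by simpa [length] using h)

lemma nodup_inj : ∀ {u v : V} (w : Walk G u v), w.support.Nodup →
    ∀ i j : ℕ, i ≤ w.length → j ≤ w.length → w.vertAt i = w.vertAt j → i = j
  | _, _, nil _, _, i, j, hi, hj, _ => by
      simp [length] at hi hj; omega
  | _, _, cons k hk t, hnd, i, j, hi, hj, hij => by
      simp only [support, List.nodup_cons] at hnd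
      match i, j with
      | 0, 0 => rfl

      | 0, (j+1) =>
        exact absurd (hij ▸ vertAt_mem_support t j (by simpa [length] using hj))
          (by simpa [vertAt] using hnd.1)
      | (i+1), 0 =>
        exact absurd (hij ▸ vertAt_mem_support t i (by simpa [length] using hi))
          (by simpa [vertAt] using hnd.1)
      | (i+1), (j+1) =>
        exact congrArg Nat.succ (nodup_inj t hnd.2 i j (by simpa [length] using hi)
          (by simpa [length] using hj) hij)

end Walk

end MixedGraph
namespace MixedGraph

variable {V : Type*} {G : MixedGraph V} {B : Set V}

namespace Walk

/-- Interior activation conditions read off positionally. -/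
lemma active_okAt : ∀ {u v : V} (w : Walk G u v) (f : Bool), Active B f w →
    ∀ j : ℕ, 0 < j → j < w.length →
      G.okAt B (w.vertAt j) ((w.kindAt (j-1)).hrB) (w.kindAt j)
  | _, _, nil _, f, _, j, _, hlt => by simp [length] at hlt
  | _, _, cons k hk t, f, ha, 1, _, hlt => by
      match t, ha with
      | nil _, _ => simp [length] at hlt
      | cons k2 hk2 t2, ha =>
        exact ha.2.1
  | _, _, cons k hk t, f, ha, (j+2), _, hlt =>
      active_okAt t k.hrB ha.2 (j+1) (Nat.succ_pos _) (by simp [length] at hlt; omega)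

/-- An injective walk yields a `Path`. -/
def toPath {u v : V} (w : Walk G u v) (hnd : w.support.Nodup) : Path G where
  n := w.length
  verts i := w.vertAt i.val
  steps i := w.kindAt i.val
  inj := by
    intro i j hij
    exact Fin.ext (nodup_inj w hnd i.val j.val (Nat.lt_succ_iff.mp i.isLt)
      (Nat.lt_succ_iff.mp j.isLt) hij)
  ok i := stepOK_vertAt w i.val i.isLt

lemma toPath_verts_zero {u v : V} (w : Walk G u v) (hnd : w.support.Nodup) :
    (w.toPath hnd).verts 0 = u := by
  show w.vertAt (0 : Fin (w.length+1)).val = u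
  rw [Fin.val_zero, vertAt_zero]

lemma toPath_verts_last {u v : V} (w : Walk G u v) (hnd : w.support.Nodup) :
    (w.toPath hnd).verts (Fin.last _) = v := by
  show w.vertAt (Fin.last w.length).val = v
  rw [Fin.val_last, vertAt_last]

lemma not_blocked_toPath {u v : V} (w : Walk G u v) (hnd : w.support.Nodup)
    (f : Bool) (hact : Active B f w) : ¬ G.Blocked (w.toPath hnd) B := by
  rintro ⟨j, hj, hc⟩
  have hok := active_okAt w f hact j.val hj j.isLt
  have hcol : G.IsCollider (w.toPath hnd) j hj ↔
      ((w.kindAt (j.val - 1)).hrB && (w.kindAt j.val).hlB) = true := by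
    rw [IsCollider]
    show (w.kindAt (j.val-1)).headRight ∧ (w.kindAt j.val).headLeft ↔ _
    rw [StepKind.headRight_iff, StepKind.headLeft_iff, Bool.and_eq_true]
  have hverts : (w.toPath hnd).verts j.castSucc = w.vertAt j.val := rfl
  rw [okAt] at hok
  by_cases hb : ((w.kindAt (j.val - 1)).hrB && (w.kindAt j.val).hlB) = true
  · rw [if_pos hb] at hok
    rcases hc with ⟨hnc, _⟩ | ⟨_, hall⟩
    · exact hnc (hcol.mpr hb)
    · obtain ⟨b, hbB, hdb⟩ := hok
      exact hall b hbB (hverts ▸ hdb)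
  · rw [if_neg hb] at hok
    rcases hc with ⟨_, hmem⟩ | ⟨hcl, _⟩
    · exact hok (hverts ▸ hmem)
    · exact hb (hcol.mp hcl)

lemma mem_support_split : ∀ {u v : V} (w : Walk G u v) (x : V), x ∈ w.support →
    ∃ (w1 : Walk G u x) (w2 : Walk G x v), w = w1.append w2
  | _, _, nil y, x, hx => by
      simp [support] at hx
      subst hx
      exact ⟨nil _, nil _, rfl⟩
  | u, _, cons k hk t, x, hx => by
      rcases List.mem_cons.mp hx with h | h
      · subst h
        exact ⟨nil _, cons k hk t, rfl⟩
      · obtain ⟨t1, t2, ht⟩ := mem_support_split t x h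
        exact ⟨cons k hk t1, t2, by rw [ht]; rfl⟩

lemma not_nodup_split : ∀ {u v : V} (w : Walk G u v), ¬ w.support.Nodup →
    ∃ (x : V) (w1 : Walk G u x) (w2 : Walk G x x) (w3 : Walk G x v),
      w = w1.append (w2.append w3) ∧ 0 < w2.length
  | _, _, nil y, h => by simp [support] at h
  | u, _, cons k hk t, h => by
      by_cases hu : u ∈ t.support
      · obtain ⟨t1, t2, ht⟩ := mem_support_split t u hu
        exact ⟨u, nil u, cons k hk t1, t2, by rw [ht]; rfl, Nat.succ_pos _⟩
      · have hnt : ¬ t.support.Nodup := by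
          intro hnd
          exact h (by simp [support, List.nodup_cons, hu, hnd])
        obtain ⟨x, t1, t2, t3, ht, hp⟩ := not_nodup_split t hnt
        exact ⟨x, cons k hk t1, t2, t3, by rw [ht]; rfl, hp⟩

end Walk

end MixedGraph
namespace MixedGraph

variable {V : Type*} {G : MixedGraph V} {B : Set V}

open Walk

/-- An unblocked path (with start outside `B`) yields an active walk. -/
lemma path_toWalk (p : Path G) (h0 : p.verts 0 ∉ B) (hnb : ¬ G.Blocked p B) :
    ∃ w : Walk G (p.verts 0) (p.verts (Fin.last p.n)), Walk.Active B false w := by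
  have hcond : ∀ (j : Fin p.n) (hj : 0 < j.val),
      (¬ G.IsCollider p j hj → p.verts j.castSucc ∉ B) ∧
      (G.IsCollider p j hj → ∃ b ∈ B, G.descends (p.verts j.castSucc) b) := by
    intro j hj
    constructor
    · intro hnc hmem; exact hnb ⟨j, hj, Or.inl ⟨hnc, hmem⟩⟩
    · intro hc; by_contra hne
      exact hnb ⟨j, hj, Or.inr ⟨hc, fun b hb hd => hne ⟨b, hb, hd⟩⟩⟩
  have key : ∀ (m j : ℕ) (hj : j + m = p.n),
      ∃ w : Walk G (p.verts ⟨j, by omega⟩) (p.verts (Fin.last p.n)),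
        ∀ f : Bool, (j = 0 → f = false) →
          (∀ _ : 0 < j, f = (p.steps ⟨j - 1, by omega⟩).hrB) → Walk.Active B f w := by
    intro m
    induction m with
    | zero =>
      intro j hj
      have hjn : j = p.n := by omega
      subst hjn
      exact ⟨Walk.nil _, fun f _ _ => trivial⟩
    | succ m IH =>
      intro j hj
      have hjn : j < p.n := by omega
      obtain ⟨t, ht⟩ := IH (j+1) (by omega)
      refine ⟨Walk.cons (p.steps ⟨j, hjn⟩) (p.ok ⟨j, hjn⟩) t, ?_⟩
      intro f hf0 hfpos
      refine ⟨?_, ht (p.steps ⟨j, hjn⟩).hrB (by simp) (fun _ => rfl)⟩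
      rcases Nat.eq_zero_or_pos j with hz | hpos
      · subst hz
        rw [hf0 rfl, okAt]
        simpa using h0
      · rw [hfpos hpos, okAt]
        have hc := hcond ⟨j, hjn⟩ hpos
        have hcol : G.IsCollider p ⟨j, hjn⟩ hpos ↔
            ((p.steps ⟨j-1, by omega⟩).hrB && (p.steps ⟨j, hjn⟩).hlB) = true := by
          rw [IsCollider, StepKind.headRight_iff, StepKind.headLeft_iff, Bool.and_eq_true]
        by_cases hb : ((p.steps ⟨j-1, by omega⟩).hrB && (p.steps ⟨j, hjn⟩).hlB) = true
        · rw [if_pos hb]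
          exact hc.2 (hcol.mpr hb)
        · rw [if_neg hb]
          exact hc.1 (fun hcl => hb (hcol.mp hcl))
  obtain ⟨w, hw⟩ := key p.n 0 (by omega)
  exact ⟨w, hw false (fun _ => rfl) (fun h => absurd h (by omega))⟩

/-- Climbing up a directed path (against the arrows) gives an active walk
arriving with no arrowhead. -/
lemma exists_bwdWalk {u s : V} (hd : Relation.ReflTransGen G.dir u s)
    (hnb : ∀ x, Relation.ReflTransGen G.dir u x → x ∉ B) :
    ∃ w : Walk G s u, Walk.Active B false w ∧ w.lastFlag false = false := by
  induction hd using Relation.ReflTransGen.head_induction_on with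
  | refl => exact ⟨Walk.nil _, trivial, rfl⟩
  | head h' hcs IH =>
    rename_i a c
    obtain ⟨w', hw', hlf⟩ := IH (fun x hx => hnb x (Relation.ReflTransGen.head h' hx))
    refine ⟨w'.append (Walk.cons .bwd h' (Walk.nil a)), ?_, ?_⟩
    · rw [active_append]
      refine ⟨hw', ?_⟩
      rw [hlf]
      exact ⟨by rw [okAt]; simpa using hnb c (Relation.ReflTransGen.single h'), trivial⟩
    · rw [lastFlag_append, hlf]; rfl

/-- Descending a directed path gives an active walk under any incoming flag. -/
lemma exists_fwdWalk {u s : V} (hd : Relation.ReflTransGen G.dir u s)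
    (hnb : ∀ x, Relation.ReflTransGen G.dir u x → x ∉ B) (f : Bool) :
    ∃ w : Walk G u s, Walk.Active B f w := by
  revert hnb f
  induction hd using Relation.ReflTransGen.head_induction_on with
  | refl => exact fun _ _ => ⟨Walk.nil _, trivial⟩
  | head h' hcs IH =>
    rename_i a c
    intro hnb f
    obtain ⟨w', hw'⟩ := IH (fun x hx => hnb x (Relation.ReflTransGen.head h' hx))
      StepKind.fwd.hrB
    refine ⟨Walk.cons .fwd h' w', ?_, hw'⟩
    rw [okAt]
    simpa [StepKind.hlB] using hnb a Relation.ReflTransGen.refl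

end MixedGraph
namespace MixedGraph

variable {V : Type*} {G : MixedGraph V} {B : Set V}

open Walk

/-- An active walk entered with an arrowhead, from a vertex with no descendant in
`B`, must be entirely made of forward edges. -/
lemma fwd_chain : ∀ {u v : V} (w : Walk G u v), 0 < w.length →
    Walk.Active B true w → (∀ b ∈ B, ¬ G.descends u b) →
    Relation.TransGen G.dir u v
  | _, _, Walk.nil _, hl, _, _ => by simp [length] at hl
  | u, v, Walk.cons k hk t, _, hact, hnb => by
    have h1 := hact.1
    rw [okAt] at h1
    have hkl : k.hlB = false := by
      cases hkl : k.hlB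
      · rfl
      · rw [hkl] at h1
        simp at h1
        obtain ⟨b, hb, hdb⟩ := h1
        exact absurd hdb (hnb b hb)
    have hkf : k = .fwd := by
      cases k
      · rfl
      · simp [StepKind.hlB] at hkl
      · simp [StepKind.hlB] at hkl
    subst hkf
    have hdir : G.dir u _ := hk
    rcases Nat.eq_zero_or_pos t.length with hz | hp
    · rw [eq_of_length_zero t hz] at hdir
      exact Relation.TransGen.single hdir
    · refine Relation.TransGen.head hdir (fwd_chain t hp hact.2 ?_)
      exact fun b hb hdb => hnb b hb (Relation.ReflTransGen.head hdir hdb)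

/-- Main lemma: if `A` and `C` are d-separated by `B` in an acyclic graph, then
there is no active walk from `A` to `C`. -/
lemma noWalk {A C : Set V} (hacyc : G.Acyclic) (hsep : G.MSep A C B) :
    ∀ (n : ℕ) {a c : V} (w : Walk G a c), w.length ≤ n → a ∈ A → c ∈ C →
      Walk.Active B false w → False := by
  have nodupCase : ∀ {a c : V} (w : Walk G a c), w.support.Nodup → a ∈ A → c ∈ C →
      Walk.Active B false w → False := by
    intro a c w hnd ha hc hact
    have hb := hsep (w.toPath hnd) (by rw [toPath_verts_zero]; exact ha)
      (by rw [toPath_verts_last]; exact hc)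
    exact not_blocked_toPath w hnd false hact hb
  intro n
  induction n with
  | zero =>
    intro a c w hlen ha hc hact
    refine nodupCase w ?_ ha hc hact
    have := eq_of_length_zero w (by omega)
    subst this
    match w, (by omega : w.length = 0) with
    | Walk.nil _, _ => simp [support]
    | Walk.cons _ _ _, h => simp [length] at h
  | succ n IH =>
    intro a c w hlen ha hc hact
    by_cases hnd : w.support.Nodup
    · exact nodupCase w hnd ha hc hact
    obtain ⟨x, w1, w2, w3, heq, hpos⟩ := not_nodup_split w hnd
    rw [heq, active_append] at hact
    obtain ⟨h1, h23⟩ := hact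
    rw [active_append] at h23
    obtain ⟨h2, h3⟩ := h23
    have hlen' : w.length = w1.length + (w2.length + w3.length) := by
      rw [heq, length_append, length_append]
    -- the spliced walk
    rcases hk3 : w3.headKind with _ | k3
    · -- w3 trivial: x = c, use w1
      have hxc := eq_of_headKind_none w3 hk3
      subst hxc
      exact IH w1 (by omega) ha hc h1
    · -- get the head kind of w2
      obtain ⟨k2, hk2⟩ : ∃ k2, w2.headKind = some k2 := by
        match w2, hpos with
        | Walk.cons k2 _ _, _ => exact ⟨k2, rfl⟩
        | Walk.nil _, hp => simp [length] at hp
      have hsplice : G.okAt B x (Walk.lastFlag false w1) k3 → False := by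
        intro hok
        have h3' : Walk.Active B (Walk.lastFlag false w1) w3 :=
          active_changeFlag w3 h3 (fun k hk => by
            rw [hk3] at hk; cases hk; exact hok)
        have : Walk.Active B false (w1.append w3) :=
          (active_append w1 w3 false).mpr ⟨h1, h3'⟩
        exact IH (w1.append w3) (by rw [length_append]; omega) ha hc this
      cases hbb : (Walk.lastFlag false w1 && k3.hlB)
      · -- splice is a non-collider; x must avoid B
        refine hsplice ?_
        rw [okAt, if_neg (by rw [hbb]; simp)]
        -- show x ∉ B
        intro hxB
        have h2ok := active_head w2 h2 hk2
        rw [okAt] at h2ok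
        have hf1 : Walk.lastFlag false w1 = true := by
          by_contra hf
          rw [if_neg (by simp [Bool.eq_false_iff.mpr hf])] at h2ok
          exact h2ok hxB
        have h3ok := active_head w3 h3 hk3
        rw [okAt] at h3ok
        have hk3l : k3.hlB = true := by
          by_contra hf
          rw [if_neg (by simp [Bool.eq_false_iff.mpr hf])] at h3ok
          exact h3ok hxB
        rw [hf1, hk3l] at hbb
        simp at hbb
      · -- splice would be a collider
        have hf1 : Walk.lastFlag false w1 = true := (Bool.and_eq_true _ _).mp hbb |>.1
        by_cases hdesc : ∃ b ∈ B, G.descends x b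
        · exact hsplice (by rw [okAt, if_pos hbb]; exact hdesc)
        · -- directed cycle through w2
          have : Relation.TransGen G.dir x x := by
            refine fwd_chain w2 hpos ?_ (fun b hb hdb => hdesc ⟨b, hb, hdb⟩)
            rw [hf1] at h2
            exact h2
          exact hacyc x this

end MixedGraph

open MixedGraph Walk

/-- extension of `d`-separated sets in a DAG whose nodes are all
ancestors of `A ∪ B ∪ C`. -/
theorem stmt0 {V : Type*} [Fintype V] (G : MixedGraph V)
    (hacyc : G.Acyclic) (hbi : ∀ u v, ¬ G.bi u v)
    (A B C : Set V)
    (hAB : Disjoint A B) (hAC : Disjoint A C) (hBC : Disjoint B C)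
    (hanc : G.ancestorsOf (A ∪ B ∪ C) = Set.univ)
    (hsep : G.MSep A C B) :
    ∃ A' C' : Set V, A ⊆ A' ∧ C ⊆ C' ∧ Disjoint A' C' ∧
      A' ∪ B ∪ C' = Set.univ ∧ G.MSep A' C' B := by
  classical
  set A' : Set V :=
    A ∪ {v | v ∉ B ∧ ∃ a ∈ A, ∃ w : Walk G a v, Walk.Active B false w} with hA'
  refine ⟨A', (A' ∪ B)ᶜ, Set.subset_union_left, ?_, ?_, ?_, ?_⟩
  · -- C ⊆ (A' ∪ B)ᶜ
    intro c hc
    simp only [Set.mem_compl_iff, Set.mem_union, not_or]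
    refine ⟨fun h => ?_, fun h => Set.disjoint_left.mp hBC h hc⟩
    rw [hA'] at h
    rcases h with h | ⟨-, a, ha, w, hw⟩
    · exact Set.disjoint_left.mp hAC h hc
    · exact noWalk hacyc hsep w.length w le_rfl ha hc hw
  · -- disjointness
    exact (disjoint_compl_right.mono_right
      (Set.compl_subset_compl.mpr Set.subset_union_left))
  · -- union is everything
    exact Set.union_compl_self _
  · -- separation
    intro p hp0 hpl
    by_contra hnb
    have hwA' : p.verts (Fin.last p.n) ∉ A' := fun h => hpl (Or.inl h)
    have hwB : p.verts (Fin.last p.n) ∉ B := fun h => hpl (Or.inr h)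
    have hune : p.verts 0 ≠ p.verts (Fin.last p.n) := fun h => hwA' (h ▸ hp0)
    have h0B : p.verts 0 ∉ B := by
      rcases hp0 with h | h
      · exact Set.disjoint_left.mp hAB h
      · exact h.1
    obtain ⟨wp, hwp⟩ := path_toWalk p h0B hnb
    rcases hk : wp.headKind with _ | k3
    · exact hune (eq_of_headKind_none wp hk)
    rcases hp0 with h0A | ⟨h0B', a, ha, wa, hwa⟩
    · exact hwA' (Or.inr ⟨hwB, p.verts 0, h0A, wp, hwp⟩)
    · cases hbb : (Walk.lastFlag false wa && k3.hlB)
      · -- non-collider junction: compose directly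
        have hwp' : Walk.Active B (Walk.lastFlag false wa) wp :=
          active_changeFlag wp hwp (fun k hk' => by
            rw [hk] at hk'; cases hk'
            rw [okAt, if_neg (by rw [hbb]; simp)]
            exact h0B')
        have : Walk.Active B false (wa.append wp) :=
          (active_append wa wp false).mpr ⟨hwa, hwp'⟩
        exact hwA' (Or.inr ⟨hwB, a, ha, _, this⟩)
      · by_cases hdesc : ∃ b ∈ B, G.descends (p.verts 0) b
        · -- collider junction with descendant in B: compose
          have hwp' : Walk.Active B (Walk.lastFlag false wa) wp :=
            active_changeFlag wp hwp (fun k hk' => by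
              rw [hk] at hk'; cases hk'
              rw [okAt, if_pos hbb]
              exact hdesc)
          have : Walk.Active B false (wa.append wp) :=
            (active_append wa wp false).mpr ⟨hwa, hwp'⟩
          exact hwA' (Or.inr ⟨hwB, a, ha, _, this⟩)
        · -- no descendant in B: use ancestrality
          have hnb' : ∀ x, Relation.ReflTransGen G.dir (p.verts 0) x → x ∉ B :=
            fun x hx hxB => hdesc ⟨x, hxB, hx⟩
          have hmem : p.verts 0 ∈ G.ancestorsOf (A ∪ B ∪ C) := by
            rw [hanc]; trivial
          obtain ⟨s, hs, hps⟩ := hmem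
          rcases hs with (hsA | hsB) | hsC
          · -- climb down from s ∈ A and continue along wp
            obtain ⟨wb, hwb, hlf⟩ := exists_bwdWalk hps hnb'
            have : Walk.Active B false (wb.append wp) := by
              rw [active_append, hlf]
              exact ⟨hwb, hwp⟩
            exact hwA' (Or.inr ⟨hwB, s, hsA, _, this⟩)
          · exact hnb' s hps hsB
          · -- descend from the junction into C
            obtain ⟨wf, hwf⟩ := exists_fwdWalk hps hnb' (Walk.lastFlag false wa)
            have : Walk.Active B false (wa.append wf) :=
              (active_append wa wf false).mpr ⟨hwa, hwf⟩
            exact noWalk hacyc hsep (wa.append wf).length _ le_rfl ha hsC this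
end

section
/- Let G be an acyclic directed mixed graph (ADMG) over finite nodes and A, B, C pairwise disjoint node sets. Then A and C are m-separated by B in G if and only if B separates A and C in the augmented graph of the subgraph of G induced by the ancestors of A ∪ B ∪ C. -/
namespace MG2

open MixedGraph

variable {V : Type*}

/-- Walks in a mixed graph (vertices may repeat). -/
inductive Walk (G : MixedGraph V) : V → V → Type _
  | nil (v : V) : Walk G v v
  | cons {u v z : V} (k : StepKind) (h : G.stepOK u v k) (w : Walk G v z) : Walk G u z

/-- A vertex with incoming step kind `k` and outgoing kind `k'` is a collider. -/
def collAt (k k' : StepKind) : Prop := k.headRight ∧ k'.headLeft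

namespace Walk

variable {G : MixedGraph V}

def append : ∀ {u v z : V}, Walk G u v → Walk G v z → Walk G u z
  | _, _, _, .nil _, w => w
  | _, _, _, .cons k h w1, w2 => .cons k h (w1.append w2)

def length : ∀ {u z : V}, Walk G u z → ℕ
  | _, _, .nil _ => 0
  | _, _, .cons _ _ w => w.length + 1

def support : ∀ {u z : V}, Walk G u z → List V
  | _, z, .nil _ => [z]
  | u, _, .cons _ _ w => u :: w.support

def kinds : ∀ {u z : V}, Walk G u z → List StepKind
  | _, _, .nil _ => []
  | _, _, .cons k _ w => k :: w.kinds

/-- Interior conditions for a walk whose first vertex has incoming kind `k`: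
each checked vertex satisfies `PC` if it is a collider, `PN` otherwise.  The
last vertex is never checked. -/
def Int (PC PN : V → Prop) : ∀ {u z : V}, StepKind → Walk G u z → Prop
  | _, _, _, .nil _ => True
  | u, _, k, .cons k' _ w =>
      ((collAt k k' → PC u) ∧ (¬ collAt k k' → PN u)) ∧ Int PC PN k' w

/-- Full-walk interior conditions (first and last vertices unchecked). -/
def Conn (PC PN : V → Prop) : ∀ {u z : V}, Walk G u z → Prop
  | _, _, .nil _ => True
  | _, _, .cons k _ w => Int PC PN k w

open Classical in
/-- Number of checked colliders failing `PC`. -/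
noncomputable def bad (PC : V → Prop) : ∀ {u z : V}, StepKind → Walk G u z → ℕ
  | _, _, _, .nil _ => 0
  | u, _, k, .cons k' _ w =>
      (if collAt k k' ∧ ¬ PC u then 1 else 0) + bad PC k' w

open Classical in
noncomputable def badW (PC : V → Prop) : ∀ {u z : V}, Walk G u z → ℕ
  | _, _, .nil _ => 0
  | _, _, .cons k _ w => bad PC k w

lemma length_append : ∀ {u v z : V} (w1 : Walk G u v) (w2 : Walk G v z),
    (w1.append w2).length = w1.length + w2.length
  | _, _, _, .nil _, w2 => by simp [append, length]
  | _, _, _, .cons k h w1, w2 => by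
      simp [append, length, length_append w1 w2]; omega

lemma int_append {PC PN : V → Prop} :
    ∀ {u v z : V} (w1 : Walk G u v) (w2 : Walk G v z) (k : StepKind),
    Int PC PN k w1 → (∀ k', Int PC PN k' w2) → Int PC PN k (w1.append w2)
  | _, _, _, .nil _, w2, k, _, h2 => h2 k
  | _, _, _, .cons k1 h w1, w2, k, h1, h2 =>
      ⟨h1.1, int_append w1 w2 k1 h1.2 h2⟩

lemma int_prefix {PC PN : V → Prop} :
    ∀ {u v z : V} (w1 : Walk G u v) (w2 : Walk G v z) (k : StepKind),
    Int PC PN k (w1.append w2) → Int PC PN k w1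
  | _, _, _, .nil _, w2, k, _ => trivial
  | _, _, _, .cons k1 h w1, w2, k, h1 => ⟨h1.1, int_prefix w1 w2 k1 h1.2⟩

lemma int_suffix_cons {PC PN : V → Prop} :
    ∀ {u v v2 z : V} (w1 : Walk G u v) (k : StepKind) (k4 : StepKind)
      (h4 : G.stepOK v v2 k4) (w3 : Walk G v2 z),
    Int PC PN k (w1.append (.cons k4 h4 w3)) → Int PC PN k4 w3
  | _, _, _, _, .nil _, k, k4, h4, w3, h => h.2
  | _, _, _, _, .cons k1 h w1, k, k4, h4, w3, hh =>
      int_suffix_cons w1 k1 k4 h4 w3 hh.2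

lemma conn_suffix {PC PN : V → Prop} :
    ∀ {u v z : V} (w1 : Walk G u v) (w2 : Walk G v z),
    Conn PC PN (w1.append w2) → Conn PC PN w2 := by
  intro u v z w1 w2 h
  cases w2 with
  | nil => trivial
  | cons k4 h4 w3 =>
    cases w1 with
    | nil => exact h
    | cons k1 h1 w1' => exact int_suffix_cons w1' k1 k4 h4 w3 h

lemma bad_append_eq {PC : V → Prop} :
    ∀ {u v z : V} (w1 : Walk G u v) (w2 : Walk G v z) (k : StepKind),
    (∀ k', bad PC k' w2 = 0) → bad PC k (w1.append w2) = bad PC k w1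
  | _, _, _, .nil _, w2, k, h2 => by simp [append, bad, h2 k]
  | _, _, _, .cons k1 h w1, w2, k, h2 => by
      simp only [append, bad, bad_append_eq w1 w2 k1 h2]

end Walk

end MG2
namespace MG2

open MixedGraph

variable {V : Type*}

namespace Walk

variable {G : MixedGraph V}

lemma int_mid {PC PN : V → Prop} :
    ∀ {u v v2 z : V} (wa : Walk G u v) (k k4 : StepKind)
      (h4 : G.stepOK v v2 k4) (w3 : Walk G v2 z),
      0 < wa.length → Int PC PN k (wa.append (.cons k4 h4 w3)) →
      ∃ kl, (collAt kl k4 → PC v) ∧ (¬ collAt kl k4 → PN v) := by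
  intro u v v2 z wa
  induction wa with
  | nil => intro _ _ _ _ hlen; simp [length] at hlen
  | @cons u x v k1 h1 wa' ih =>
    intro k k4 h4 w3 _ hint
    cases wa' with
    | nil => exact ⟨k1, hint.2.1⟩
    | cons k5 h5 wa'' =>
      exact ih k1 k4 h4 w3 (by simp [length]) hint.2

/-- Following forward steps: either the start has a descendant in `B`
(via a collider satisfying `PC`), or the walk is entirely directed. -/
lemma run {PC : V → Prop} {PN : V → Prop}
    (hPC : ∀ x y, G.dir x y → PC y → PC x) :
    ∀ {x z : V} (w : Walk G x z) (k : StepKind), k.headRight →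
      Int PC PN k w → PC x ∨ Relation.ReflTransGen G.dir x z := by
  intro x z w
  induction w with
  | nil => exact fun _ _ _ => Or.inr Relation.ReflTransGen.refl
  | @cons u x2 z k' h w' ih =>
    intro k hk hint
    cases k' with
    | fwd =>
      have h' : G.dir u x2 := h
      rcases ih StepKind.fwd trivial hint.2 with hb | hrt
      · exact Or.inl (hPC _ _ h' hb)
      · exact Or.inr (Relation.ReflTransGen.head h' hrt)
    | bwd => exact Or.inl (hint.1.1 ⟨hk, trivial⟩)
    | bidir => exact Or.inl (hint.1.1 ⟨hk, trivial⟩)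

/-- Shortcutting a loop at the head of an interior context. -/
lemma int_shortcut_head {PC : V → Prop} {PN : V → Prop}
    (hacyc : G.Acyclic) (hPC : ∀ x y, G.dir x y → PC y → PC x) :
    ∀ {v c : V} (w2 : Walk G v v) (w3 : Walk G v c) (k : StepKind),
      0 < w2.length → Int PC PN k (w2.append w3) → Int PC PN k w3 := by
  intro v c w2 w3 k hlen hint
  cases w3 with
  | nil => trivial
  | @cons v v2 c k4 h4 w3' =>
    refine ⟨?_, int_suffix_cons w2 k k4 h4 w3' hint⟩
    constructor
    · -- collider case: need PC v
      rintro ⟨hkR, hk4L⟩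
      cases w2 with
      | nil => simp [length] at hlen
      | @cons v x2 v k5 h5 w2' =>
        cases k5 with
        | fwd =>
          have h5' : G.dir v x2 := h5
          have hpre : Int PC PN StepKind.fwd w2' :=
            int_prefix w2' _ StepKind.fwd hint.2
          rcases run hPC w2' StepKind.fwd trivial hpre with hb | hrt
          · exact hPC _ _ h5' hb
          · exact absurd (Relation.TransGen.head' h5' hrt) (hacyc v)
        | bwd => exact hint.1.1 ⟨hkR, trivial⟩
        | bidir => exact hint.1.1 ⟨hkR, trivial⟩
    · -- non-collider case: need PN v
      intro hnc
      by_cases hk4L : StepKind.headLeft k4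
      · have hkR : ¬ StepKind.headRight k := fun h => hnc ⟨h, hk4L⟩
        cases w2 with
        | nil => simp [length] at hlen
        | cons k5 h5 w2' =>
          exact hint.1.2 (fun hc => hkR hc.1)
      · rcases int_mid w2 k k4 h4 w3' hlen hint with ⟨kl, _, h2⟩
        exact h2 (fun hc => hk4L hc.2)

lemma int_shortcut {PC : V → Prop} {PN : V → Prop}
    (hacyc : G.Acyclic) (hPC : ∀ x y, G.dir x y → PC y → PC x) :
    ∀ {a v c : V} (w1 : Walk G a v) (w2 : Walk G v v) (w3 : Walk G v c)
      (k : StepKind), 0 < w2.length →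
      Int PC PN k (w1.append (w2.append w3)) → Int PC PN k (w1.append w3) := by
  intro a v c w1
  induction w1 with
  | nil => exact fun w2 w3 k h hint => int_shortcut_head hacyc hPC w2 w3 k h hint
  | cons k1 h1 w1' ih =>
    intro w2 w3 k hlen hint
    exact ⟨hint.1, ih w2 w3 k1 hlen hint.2⟩

lemma conn_shortcut {PC : V → Prop} {PN : V → Prop}
    (hacyc : G.Acyclic) (hPC : ∀ x y, G.dir x y → PC y → PC x)
    {a v c : V} (w1 : Walk G a v) (w2 : Walk G v v) (w3 : Walk G v c)
    (hlen : 0 < w2.length) (hconn : Conn PC PN (w1.append (w2.append w3))) :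
    Conn PC PN (w1.append w3) := by
  cases w1 with
  | nil => exact conn_suffix w2 w3 hconn
  | cons k1 h1 w1' => exact int_shortcut hacyc hPC w1' w2 w3 k1 hlen hconn

lemma mem_split :
    ∀ {u z : V} (ω : Walk G u z) (v : V), v ∈ ω.support →
      ∃ (w1 : Walk G u v) (w2 : Walk G v z), ω = w1.append w2 := by
  intro u z ω
  induction ω with
  | nil w =>
    intro v hv
    simp [support] at hv
    subst hv
    exact ⟨.nil v, .nil v, rfl⟩
  | @cons u x z k h w ih =>
    intro v hv
    simp [support] at hv
    rcases hv with rfl | hv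
    · exact ⟨.nil v, .cons k h w, rfl⟩
    · rcases ih v hv with ⟨w1, w2, rfl⟩
      exact ⟨.cons k h w1, w2, rfl⟩

lemma not_nodup_split :
    ∀ {u z : V} (ω : Walk G u z), ¬ ω.support.Nodup →
      ∃ (v : V) (w1 : Walk G u v) (w2 : Walk G v v) (w3 : Walk G v z),
        ω = w1.append (w2.append w3) ∧ 0 < w2.length := by
  intro u z ω
  induction ω with
  | nil w => intro h; exact absurd (List.nodup_singleton _) h
  | @cons u x z k h w ih =>
    intro hnd
    rw [support, List.nodup_cons] at hnd
    push_neg at hnd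
    by_cases hu : u ∈ w.support
    · rcases mem_split w u hu with ⟨w1', w2', rfl⟩
      exact ⟨u, .nil u, .cons k h w1', w2', rfl, by simp [length]⟩
    · rcases ih (hnd hu) with ⟨v, w1, w2, w3, rfl, hl⟩
      exact ⟨v, .cons k h w1, w2, w3, rfl, hl⟩

end Walk

end MG2
namespace MG2

open MixedGraph

variable {V : Type*}

namespace Walk

variable {G : MixedGraph V}

lemma toNodup {PC PN : V → Prop}
    (hacyc : G.Acyclic) (hPC : ∀ x y, G.dir x y → PC y → PC x) :
    ∀ (N : ℕ) {a c : V} (ω : Walk G a c), ω.length ≤ N → Conn PC PN ω →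
      ∃ ω' : Walk G a c, Conn PC PN ω' ∧ ω'.support.Nodup := by
  intro N
  induction N with
  | zero =>
    intro a c ω hlen hconn
    by_cases hnd : ω.support.Nodup
    · exact ⟨ω, hconn, hnd⟩
    · rcases not_nodup_split ω hnd with ⟨v, w1, w2, w3, rfl, hl⟩
      have := length_append w1 (w2.append w3)
      have := length_append w2 w3
      omega
  | succ N ih =>
    intro a c ω hlen hconn
    by_cases hnd : ω.support.Nodup
    · exact ⟨ω, hconn, hnd⟩
    · rcases not_nodup_split ω hnd with ⟨v, w1, w2, w3, rfl, hl⟩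
      have h1 := length_append w1 (w2.append w3)
      have h2 := length_append w2 w3
      have h3 := length_append w1 w3
      exact ih (w1.append w3) (by omega)
        (conn_shortcut hacyc hPC w1 w2 w3 hl hconn)

lemma support_length : ∀ {u z : V} (ω : Walk G u z),
    ω.support.length = ω.length + 1
  | _, _, .nil _ => rfl
  | _, _, .cons _ _ w => by simp [support, length, support_length w]

lemma kinds_length : ∀ {u z : V} (ω : Walk G u z),
    ω.kinds.length = ω.length
  | _, _, .nil _ => rfl
  | _, _, .cons _ _ w => by simp [kinds, length, kinds_length w]

lemma support_get_zero : ∀ {u z : V} (ω : Walk G u z),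
    ω.support.get ⟨0, by simp [support_length]⟩ = u
  | _, _, .nil _ => rfl
  | _, _, .cons _ _ w => rfl

lemma support_get_last : ∀ {u z : V} (ω : Walk G u z),
    ω.support.get ⟨ω.length, by simp [support_length]⟩ = z
  | _, _, .nil _ => rfl
  | _, _, .cons _ _ w => support_get_last w

lemma get_ok : ∀ {u z : V} (ω : Walk G u z) (i : ℕ) (hi : i < ω.length),
    G.stepOK (ω.support.get ⟨i, by simp [support_length]; omega⟩)
      (ω.support.get ⟨i + 1, by simp [support_length]; omega⟩)
      (ω.kinds.get ⟨i, by simp [kinds_length]; omega⟩) := by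
  intro u z ω
  induction ω with
  | nil => intro i hi; simp [length] at hi
  | @cons u x z k h w ih =>
    intro i hi
    cases i with
    | zero =>
      have h0 := support_get_zero w
      simp only [List.get_eq_getElem] at h0
      simp only [support, kinds, List.get_eq_getElem, List.getElem_cons_zero,
        List.getElem_cons_succ]
      rw [h0]
      exact h
    | succ j =>
      have hj : j < w.length := by simp [length] at hi; omega
      simpa [support, kinds] using ih j hj

/-- The checked conditions at index `j` of a walk, with `prev` kind. -/
lemma int_get {PC PN : V → Prop} :
    ∀ {u z : V} (ω : Walk G u z) (k : StepKind), Int PC PN k ω →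
    ∀ (j : ℕ) (hj : j < ω.length),
      (collAt (if h : 0 < j then ω.kinds.get ⟨j - 1, by simp [kinds_length]; omega⟩ else k)
          (ω.kinds.get ⟨j, by simp [kinds_length]; omega⟩) →
        PC (ω.support.get ⟨j, by simp [support_length]; omega⟩)) ∧
      (¬ collAt (if h : 0 < j then ω.kinds.get ⟨j - 1, by simp [kinds_length]; omega⟩ else k)
          (ω.kinds.get ⟨j, by simp [kinds_length]; omega⟩) →
        PN (ω.support.get ⟨j, by simp [support_length]; omega⟩)) := by
  intro u z ω
  induction ω with
  | nil => intro k _ j hj; simp [length] at hj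
  | @cons u x z k' h w ih =>
    intro k hint j hj
    cases j with
    | zero => simpa [support, kinds] using hint.1
    | succ j =>
      have hj' : j < w.length := by simp [length] at hj; omega
      have := ih k' hint.2 j hj'
      cases j with
      | zero => simpa [support, kinds] using this
      | succ m =>
        simpa [support, kinds, List.get_cons_succ, Nat.succ_sub_one] using this

end Walk

end MG2
namespace MG2

open MixedGraph

variable {V : Type*} {G : MixedGraph V}

lemma stepOK_of_restrict {W : Set V} {u v : V} {k : StepKind}
    (h : (G.restrict W).stepOK u v k) : G.stepOK u v k := by
  cases k <;> exact h.1

lemma mem_of_restrict_stepOK {W : Set V} {u v : V} {k : StepKind}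
    (h : (G.restrict W).stepOK u v k) : u ∈ W ∧ v ∈ W := by
  cases k with
  | fwd => exact ⟨h.2.1, h.2.2⟩
  | bwd => exact ⟨h.2.2, h.2.1⟩
  | bidir => exact ⟨h.2.1, h.2.2⟩

lemma restrict_path_mem {W : Set V} (q : MixedGraph.Path (G.restrict W))
    (hn : q.n ≠ 0) (i : Fin (q.n + 1)) : q.verts i ∈ W := by
  rcases lt_or_ge i.val q.n with hi | hi
  · have := mem_of_restrict_stepOK (q.ok ⟨i.val, hi⟩)
    have hv : q.verts (Fin.castSucc ⟨i.val, hi⟩) = q.verts i := by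
      apply congrArg; ext; simp
    rw [hv] at this
    exact this.1
  · have hi' : i.val = q.n := by omega
    have hlt : q.n - 1 < q.n := by omega
    have := mem_of_restrict_stepOK (q.ok ⟨q.n - 1, hlt⟩)
    have hv : q.verts (Fin.succ ⟨q.n - 1, hlt⟩) = q.verts i := by
      apply congrArg; ext; simp only [Fin.val_succ]; omega
    rw [hv] at this
    exact this.2

def mkWalk : ∀ (n : ℕ) (f : Fin (n + 1) → V) (s : Fin n → StepKind)
    (_ : ∀ i : Fin n, G.stepOK (f i.castSucc) (f i.succ) (s i)),
    Walk G (f 0) (f (Fin.last n))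
  | 0, f, _, _ => Walk.nil (f 0)
  | n + 1, f, s, ok =>
      Walk.cons (s 0) (ok 0)
        (mkWalk n (fun i => f i.succ) (fun i => s i.succ) (fun i => ok i.succ))

lemma mkWalk_int (PC PN : V → Prop) :
    ∀ (n : ℕ) (f : Fin (n + 1) → V) (s : Fin n → StepKind)
      (ok : ∀ i : Fin n, G.stepOK (f i.castSucc) (f i.succ) (s i)) (k : StepKind),
      (∀ i : Fin n,
        (collAt (if h : 0 < i.val then s ⟨i.val - 1, by omega⟩ else k) (s i) →
          PC (f i.castSucc)) ∧
        (¬ collAt (if h : 0 < i.val then s ⟨i.val - 1, by omega⟩ else k) (s i) →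
          PN (f i.castSucc))) →
      Walk.Int PC PN k (mkWalk n f s ok) := by
  intro n
  induction n with
  | zero => intro f s ok k H; trivial
  | succ n ih =>
    intro f s ok k H
    refine ⟨?_, ih _ _ _ (s 0) ?_⟩
    · have := H 0
      simpa using this
    · intro i
      have H' := H i.succ
      rw [dif_pos (by simp : (0 : ℕ) < i.succ.val)] at H'
      have e1 : i.succ.castSucc = i.castSucc.succ := by ext; simp
      rw [e1] at H'
      by_cases h0 : 0 < i.val
      · rw [dif_pos h0]
        have e2 : (⟨i.succ.val - 1, by omega⟩ : Fin (n + 1)) =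
            (⟨i.val - 1, by omega⟩ : Fin n).succ := by
          ext; simp; omega
        rw [e2] at H'
        exact H'
      · rw [dif_neg h0]
        have e2 : (⟨i.succ.val - 1, by omega⟩ : Fin (n + 1)) = (0 : Fin (n + 1)) := by
          ext; simp; omega
        rw [e2] at H'
        exact H'

end MG2
namespace MG2

open MixedGraph

variable {V : Type*} {G : MixedGraph V}

namespace Walk

lemma int_of_bad_zero {PC PN PB : V → Prop} :
    ∀ {u z : V} (ω : Walk G u z) (k : StepKind),
      Int PC PN k ω → bad PB k ω = 0 → Int PB PN k ω := by
  intro u z ω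
  induction ω with
  | nil => intro k _ _; trivial
  | @cons u x z k' h w ih =>
    intro k hint hbad
    rw [bad] at hbad
    refine ⟨⟨?_, hint.1.2⟩, ih k' hint.2 (by omega)⟩
    intro hc
    by_contra hnb
    rw [if_pos ⟨hc, hnb⟩] at hbad
    omega

/-- Find a bad collider in a walk. -/
lemma split {PC PN PB : V → Prop} :
    ∀ {u c : V} (ω : Walk G u c) (k : StepKind),
      Int PC PN k ω → bad PB k ω ≠ 0 →
      ∃ (d v : V) (k2 : StepKind) (h2 : G.stepOK d v k2)
        (w1 : Walk G u d) (w2 : Walk G v c),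
        ω = w1.append (.cons k2 h2 w2) ∧ PC d ∧ ¬ PB d ∧ k2.headLeft ∧
          Int PC PN k2 w2 ∧ Int PC PN k w1 ∧
          bad PB k2 w2 + 1 ≤ bad PB k ω ∧ bad PB k w1 + 1 ≤ bad PB k ω := by
  intro u c ω
  induction ω with
  | nil => intro k _ hbad; exact absurd rfl hbad
  | @cons u x c k' h w ih =>
    intro k hint hbad
    by_cases hb : collAt k k' ∧ ¬ PB u
    · refine ⟨u, x, k', h, .nil u, w, rfl, hint.1.1 hb.1, hb.2, hb.1.2, hint.2,
        trivial, ?_, ?_⟩ <;>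
        simp [bad, if_pos hb] <;> omega
    · have hbad' : bad PB k' w ≠ 0 := by
        rw [bad, if_neg hb] at hbad; simpa using hbad
      rcases ih k' hint.2 hbad' with
        ⟨d, v, k2, h2, w1, w2, heq, hPCd, hnPB, hhl, hint2, hint1, hc2, hc1⟩
      refine ⟨d, v, k2, h2, .cons k' h w1, w2, by rw [heq]; rfl, hPCd, hnPB, hhl,
        hint2, ⟨hint.1, hint1⟩, ?_, ?_⟩ <;>
        simp [bad, if_neg hb] <;> omega

end Walk

section Detours

variable {B : Set V} {PC : V → Prop} {PB : V → Prop}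

/-- Walking up a directed path `t ← … ← d` and continuing along `cons k2 h2 w2`. -/
lemma upWalk {d t : V} (hds : Relation.ReflTransGen G.dir d t)
    (hdB : ∀ x, G.descends d x → x ∉ B)
    {v c : V} (k2 : StepKind) (h2 : G.stepOK d v k2) (w2 : Walk G v c)
    (hint : Walk.Int PC (· ∉ B) k2 w2) :
    ∃ ω : Walk G t c, ∀ k : StepKind, ¬ k.headRight →
      Walk.Int PC (· ∉ B) k ω ∧ Walk.bad PB k ω ≤ Walk.bad PB k2 w2 := by
  induction hds with
  | refl =>
    refine ⟨.cons k2 h2 w2, ?_⟩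
    intro k hk
    constructor
    · exact ⟨⟨fun hc => absurd hc.1 hk,
        fun _ => hdB d Relation.ReflTransGen.refl⟩, hint⟩
    · simp only [Walk.bad]
      rw [if_neg (fun hc => hk hc.1.1)]
      omega
  | @tail x y hdx hxy ih =>
    rcases ih with ⟨ω, hω⟩
    refine ⟨.cons .bwd (show G.stepOK y x .bwd from hxy) ω, ?_⟩
    intro k hk
    have h1 := hω StepKind.bwd (fun h => h)
    constructor
    · exact ⟨⟨fun hc => absurd hc.1 hk,
        fun _ => hdB y (Relation.ReflTransGen.tail hdx hxy)⟩, h1.1⟩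
    · simp only [Walk.bad]
      rw [if_neg (fun hc => hk hc.1.1)]
      omega

/-- Walking down a directed path `d → … → t`. -/
lemma downWalk {d t : V} (hds : Relation.ReflTransGen G.dir d t)
    (hdB : ∀ x, G.descends d x → x ∉ B) :
    ∃ ω : Walk G d t, (∀ k, Walk.Int PC (· ∉ B) k ω) ∧
      (∀ k, Walk.bad PB k ω = 0) := by
  induction hds with
  | refl => exact ⟨.nil d, fun _ => trivial, fun _ => rfl⟩
  | @tail x y hdx hxy ih =>
    rcases ih with ⟨ω, hint, hbad⟩
    refine ⟨ω.append (.cons .fwd (show G.stepOK x y .fwd from hxy) (.nil y)), ?_, ?_⟩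
    · intro k
      refine Walk.int_append _ _ _ (hint k) ?_
      intro k'
      exact ⟨⟨fun hc => False.elim hc.2, fun _ => hdB x hdx⟩, trivial⟩
    · intro k
      have hz : ∀ k', Walk.bad PB k'
          (Walk.cons StepKind.fwd (show G.stepOK x y .fwd from hxy) (Walk.nil y)) = 0 := by
        intro k'
        simp only [Walk.bad]
        rw [if_neg (fun hc => hc.1.2)]
      rw [Walk.bad_append_eq _ _ _ hz]
      exact hbad k

end Detours

end MG2
namespace MG2

open MixedGraph

variable {V : Type*} {G : MixedGraph V}

section Main

variable {A B C : Set V}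

/-- Rerouting: a walk between `A` and `C` whose colliders are ancestors of
`A ∪ B ∪ C` can be turned into one whose colliders are ancestors of `B`. -/
lemma step2 (hAC : Disjoint A C) :
    ∀ (N : ℕ) (a c : V), a ∈ A → c ∈ C → ∀ (ω : Walk G a c),
      Walk.Conn (· ∈ G.ancestorsOf (A ∪ B ∪ C)) (· ∉ B) ω →
      Walk.badW (fun v => ∃ b ∈ B, G.descends v b) ω ≤ N →
      ∃ a' ∈ A, ∃ c' ∈ C, ∃ ω' : Walk G a' c',
        Walk.Conn (fun v => ∃ b ∈ B, G.descends v b) (· ∉ B) ω' := by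
  set PB : V → Prop := fun v => ∃ b ∈ B, G.descends v b with hPBdef
  intro N
  induction N with
  | zero =>
    intro a c ha hc ω hconn hbad
    cases ω with
    | nil => exact absurd hc (Set.disjoint_left.mp hAC ha)
    | @cons a x c k0 h0 ω' =>
      simp only [Walk.badW] at hbad
      by_cases hb : Walk.bad PB k0 ω' = 0
      · exact ⟨a, ha, c, hc, .cons k0 h0 ω',
          Walk.int_of_bad_zero (PB := PB) ω' k0 hconn hb⟩
      · rcases Walk.split ω' k0 hconn hb with
          ⟨d, v, k2, h2, w1, w2, heq, hPCd, hnPB, hhl, hint2, hint1, hc2, hc1⟩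
        omega
  | succ N IH =>
    intro a c ha hc ω hconn hbad
    cases ω with
    | nil => exact absurd hc (Set.disjoint_left.mp hAC ha)
    | @cons a x c k0 h0 ω' =>
      simp only [Walk.badW] at hbad
      by_cases hb : Walk.bad PB k0 ω' = 0
      · exact ⟨a, ha, c, hc, .cons k0 h0 ω',
          Walk.int_of_bad_zero (PB := PB) ω' k0 hconn hb⟩
      · rcases Walk.split ω' k0 hconn hb with
          ⟨d, v, k2, h2, w1, w2, heq, hPCd, hnPB, hhl, hint2, hint1, hc2, hc1⟩
        rcases hPCd with ⟨t, htT, hdt⟩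
        have hdB : ∀ x, G.descends d x → x ∉ B := fun x hdx hxB => hnPB ⟨x, hxB, hdx⟩
        have htAC : t ∈ A ∪ C := by
          rcases htT with (h | h) | h
          · exact Or.inl h
          · exact absurd h (hdB t hdt)
          · exact Or.inr h
        rcases htAC with htA | htC
        · -- go up to `t ∈ A`, drop the prefix
          rcases upWalk (PB := PB) hdt hdB k2 h2 w2 hint2 with ⟨ω2, hω2⟩
          cases ω2 with
          | nil => exact absurd hc (Set.disjoint_left.mp hAC htA)
          | @cons t y c k3 h3 w3 =>
            have h1 := hω2 StepKind.bwd (fun h => h)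
            refine IH t c htA hc (.cons k3 h3 w3) h1.1.2 ?_
            have hle : Walk.bad PB k3 w3 ≤ Walk.bad PB StepKind.bwd (.cons k3 h3 w3) := by
              simp only [Walk.bad]; omega
            simp only [Walk.badW]
            have := h1.2
            omega
        · -- go down to `t ∈ C`, drop the suffix
          rcases downWalk (PC := (· ∈ G.ancestorsOf (A ∪ B ∪ C))) (PB := PB)
            hdt hdB with ⟨dw, hdwInt, hdwBad⟩
          refine IH a t ha htC (.cons k0 h0 (w1.append dw))
            (Walk.int_append _ _ _ hint1 hdwInt) ?_
          simp only [Walk.badW]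
          rw [Walk.bad_append_eq _ _ _ hdwBad]
          omega

/-- From a chain in the augmented graph of the ancestral subgraph, build a
walk whose checked colliders are ancestors of `A ∪ B ∪ C` and whose checked
non-colliders avoid `B`. -/
lemma chain_to_walk {a c : V}
    (h : Relation.ReflTransGen
      (fun u v => MixedGraph.collConn (G.restrict (G.ancestorsOf (A ∪ B ∪ C))) u v ∧
        u ∉ B ∧ v ∉ B) a c) :
    ∃ ω : Walk G a c, ∀ k, Walk.Int (· ∈ G.ancestorsOf (A ∪ B ∪ C)) (· ∉ B) k ω := by
  set W : Set V := G.ancestorsOf (A ∪ B ∪ C) with hW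
  induction h using Relation.ReflTransGen.head_induction_on with
  | refl => exact ⟨.nil c, fun _ => trivial⟩
  | @head a x hR hch ih =>
    rcases ih with ⟨ωx, hωx⟩
    rcases hR with ⟨⟨hne, q, hq0, hql, hqcoll⟩, haB, hxB⟩
    have hn : q.n ≠ 0 := by
      intro h0
      apply hne
      rw [← hq0, ← hql]
      exact congrArg q.verts (Fin.ext (by simp [h0]))
    have hmem : ∀ i : Fin (q.n + 1), q.verts i ∈ W := restrict_path_mem q hn
    have hint : ∀ k, Walk.Int (· ∈ W) (· ∉ B) k
        (mkWalk q.n q.verts q.steps (fun i => stepOK_of_restrict (q.ok i))) := by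
      intro k
      apply mkWalk_int
      intro i
      refine ⟨fun _ => hmem _, ?_⟩
      by_cases h0 : 0 < i.val
      · intro hnc
        exact absurd (hqcoll i h0) (by rw [dif_pos h0] at hnc; exact hnc)
      · intro _
        have : q.verts i.castSucc = q.verts 0 :=
          congrArg q.verts (Fin.ext (by simp; omega))
        rw [this, hq0]
        exact haB
    have hex : ∃ w : Walk G a x, ∀ k, Walk.Int (· ∈ W) (· ∉ B) k w := by
      rw [← hq0, ← hql]
      exact ⟨_, hint⟩
    rcases hex with ⟨wq, hwq⟩
    exact ⟨wq.append ωx, fun k => Walk.int_append _ _ _ (hwq k) hωx⟩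

end Main

end MG2
namespace MG2

open MixedGraph

variable {V : Type*} {G : MixedGraph V}

lemma exists_unblocked_path {B : Set V} {a c : V} (hne : a ≠ c) (ω : Walk G a c)
    (hconn : Walk.Conn (fun v => ∃ b ∈ B, G.descends v b) (· ∉ B) ω)
    (hnd : ω.support.Nodup) :
    ∃ p : MixedGraph.Path G, p.verts 0 = a ∧ p.verts (Fin.last p.n) = c ∧
      ¬ G.Blocked p B := by
  cases ω with
  | nil => exact absurd rfl hne
  | @cons a x c k0 h0 w =>
    set ω : Walk G a c := Walk.cons k0 h0 w with hω
    have hvlen : ∀ i : Fin (ω.length + 1), i.val < ω.support.length := by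
      intro i; rw [Walk.support_length]; exact i.isLt
    have hklen : ∀ i : Fin ω.length, i.val < ω.kinds.length := by
      intro i; rw [Walk.kinds_length]; exact i.isLt
    have pinj : Function.Injective
        (fun i : Fin (ω.length + 1) => ω.support.get ⟨i.val, hvlen i⟩) := by
      intro i j h
      have h2 := List.nodup_iff_injective_get.mp hnd h
      have h3 := congrArg Fin.val h2
      simp only [] at h3
      exact Fin.ext h3
    let p : MixedGraph.Path G :=
      ⟨ω.length, fun i => ω.support.get ⟨i.val, hvlen i⟩,
        fun i => ω.kinds.get ⟨i.val, hklen i⟩, pinj,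
        fun i => Walk.get_ok ω i.val i.isLt⟩
    refine ⟨p, Walk.support_get_zero ω, Walk.support_get_last ω, ?_⟩
    rintro ⟨j, hj, hcase⟩
    have hlen2 : ω.length = w.length + 1 := rfl
    have hjlt : j.val < w.length + 1 := j.isLt
    obtain ⟨m, hm⟩ : ∃ m, j.val = m + 1 := ⟨j.val - 1, by omega⟩
    have hm2 : m < w.length := by omega
    have HG := Walk.int_get w k0 hconn m hm2
    -- identify path data with walk data
    have ev : p.verts j.castSucc =
        w.support.get ⟨m, by rw [Walk.support_length]; omega⟩ := by
      have h1 : p.verts j.castSucc =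
          ω.support.get ⟨m + 1, by rw [Walk.support_length]; omega⟩ :=
        congrArg ω.support.get (Fin.ext (by simp [hm]))
      rw [h1]
      rfl
    have es1 : p.steps j = w.kinds.get ⟨m, by rw [Walk.kinds_length]; omega⟩ := by
      have h1 : p.steps j =
          ω.kinds.get ⟨m + 1, by rw [Walk.kinds_length]; omega⟩ :=
        congrArg ω.kinds.get (Fin.ext (by simp [hm]))
      rw [h1]
      rfl
    have es0 : p.steps ⟨j.val - 1, lt_of_le_of_lt (Nat.sub_le _ _) j.isLt⟩ =
        (if h : 0 < m then w.kinds.get ⟨m - 1, by rw [Walk.kinds_length]; omega⟩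
          else k0) := by
      have h1 : p.steps ⟨j.val - 1, lt_of_le_of_lt (Nat.sub_le _ _) j.isLt⟩ =
          ω.kinds.get ⟨m, by rw [Walk.kinds_length]; omega⟩ :=
        congrArg ω.kinds.get (Fin.ext (by simp [hm]))
      rw [h1]
      cases m with
      | zero => rw [dif_neg (by omega)]; rfl
      | succ m' => rw [dif_pos (Nat.succ_pos m')]; rfl
    have hIsColl : G.IsCollider p j hj ↔
        collAt (if h : 0 < m then w.kinds.get ⟨m - 1, by rw [Walk.kinds_length]; omega⟩
          else k0) (w.kinds.get ⟨m, by rw [Walk.kinds_length]; omega⟩) := by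
      unfold MixedGraph.IsCollider collAt
      rw [es0, es1]
    rcases hcase with ⟨hnc, hmem⟩ | ⟨hc, hdesc⟩
    · rw [hIsColl] at hnc
      rw [ev] at hmem
      exact HG.2 hnc hmem
    · rw [hIsColl] at hc
      rcases HG.1 hc with ⟨b, hbB, hd⟩
      rw [ev] at hdesc
      exact hdesc b hbB hd

end MG2
namespace MG2

open MixedGraph

variable {V : Type*} {G : MixedGraph V}

lemma anc_step {S : Set V} {x y : V} (h : G.dir x y) (hy : y ∈ G.ancestorsOf S) :
    x ∈ G.ancestorsOf S := by
  rcases hy with ⟨s, hs, hrt⟩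
  exact ⟨s, hs, Relation.ReflTransGen.head h hrt⟩

lemma anc_self {S : Set V} {x : V} (h : x ∈ S) : x ∈ G.ancestorsOf S :=
  ⟨x, h, Relation.ReflTransGen.refl⟩

section Reverse

variable {A B C : Set V} {p : MixedGraph.Path G}
  (hA : p.verts 0 ∈ A) (hC : p.verts (Fin.last p.n) ∈ C)
  (hNC : ∀ (j : Fin p.n) (hj : 0 < j.val),
    ¬ G.IsCollider p j hj → p.verts j.castSucc ∉ B)
  (hCO : ∀ (j : Fin p.n) (hj : 0 < j.val),
    G.IsCollider p j hj → ∃ b ∈ B, G.descends (p.verts j.castSucc) b)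

include hC hCO in
lemma Rclaim : ∀ (M i : ℕ) (hi : i ≤ p.n), p.n - i ≤ M → ∀ (_ : 0 < i)
    (_ : (p.steps ⟨i - 1, by omega⟩).headRight),
    p.verts ⟨i, by omega⟩ ∈ G.ancestorsOf (A ∪ B ∪ C) := by
  intro M
  induction M with
  | zero =>
    intro i hi hM h0 hR
    have hin : i = p.n := by omega
    have he : (⟨i, by omega⟩ : Fin (p.n + 1)) = Fin.last p.n := Fin.ext (by simp [hin])
    rw [he]
    exact anc_self (Or.inr hC)
  | succ M ih =>
    intro i hi hM h0 hR
    by_cases hin : i = p.n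
    · have he : (⟨i, by omega⟩ : Fin (p.n + 1)) = Fin.last p.n := Fin.ext (by simp [hin])
      rw [he]
      exact anc_self (Or.inr hC)
    · have hilt : i < p.n := by omega
      have hok := p.ok ⟨i, hilt⟩
      cases hk : p.steps ⟨i, hilt⟩ with
      | fwd =>
        rw [hk] at hok
        have hd : G.dir (p.verts ⟨i, by omega⟩) (p.verts ⟨i + 1, by omega⟩) := hok
        refine anc_step hd (ih (i + 1) (by omega) (by omega) (by omega) ?_)
        have he : (⟨i + 1 - 1, by omega⟩ : Fin p.n) = ⟨i, hilt⟩ := Fin.ext (by simp)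
        rw [he, hk]
        trivial
      | bwd =>
        have hcol : G.IsCollider p ⟨i, hilt⟩ h0 := by
          refine ⟨hR, ?_⟩
          rw [hk]
          trivial
        rcases hCO ⟨i, hilt⟩ h0 hcol with ⟨b, hbB, hdb⟩
        exact ⟨b, Or.inl (Or.inr hbB), hdb⟩
      | bidir =>
        have hcol : G.IsCollider p ⟨i, hilt⟩ h0 := by
          refine ⟨hR, ?_⟩
          rw [hk]
          trivial
        rcases hCO ⟨i, hilt⟩ h0 hcol with ⟨b, hbB, hdb⟩
        exact ⟨b, Or.inl (Or.inr hbB), hdb⟩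

include hA hCO in
lemma Lclaim : ∀ (M i : ℕ) (_ : i ≤ M) (hi : i < p.n)
    (_ : (p.steps ⟨i, hi⟩).headLeft),
    p.verts ⟨i, by omega⟩ ∈ G.ancestorsOf (A ∪ B ∪ C) := by
  intro M
  induction M with
  | zero =>
    intro i hM hi hL
    have hi0 : i = 0 := by omega
    have he : (⟨i, by omega⟩ : Fin (p.n + 1)) = 0 := Fin.ext (by simp [hi0])
    rw [he]
    exact anc_self (Or.inl (Or.inl hA))
  | succ M ih =>
    intro i hM hi hL
    by_cases hi0 : i = 0
    · have he : (⟨i, by omega⟩ : Fin (p.n + 1)) = 0 := Fin.ext (by simp [hi0])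
      rw [he]
      exact anc_self (Or.inl (Or.inl hA))
    · have h0 : 0 < i := by omega
      have hok := p.ok ⟨i - 1, by omega⟩
      cases hk : p.steps ⟨i - 1, by omega⟩ with
      | bwd =>
        rw [hk] at hok
        have hd : G.dir (p.verts ⟨i, by omega⟩) (p.verts ⟨i - 1, by omega⟩) := by
          have e1 : (Fin.succ ⟨i - 1, by omega⟩ : Fin (p.n + 1)) = ⟨i, by omega⟩ :=
            Fin.ext (by simp; omega)
          have e2 : (Fin.castSucc ⟨i - 1, by omega⟩ : Fin (p.n + 1)) =
              ⟨i - 1, by omega⟩ := Fin.ext (by simp)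
          rw [e1, e2] at hok
          exact hok
        refine anc_step hd (ih (i - 1) (by omega) (by omega) ?_)
        rw [hk]
        trivial
      | fwd =>
        have hcol : G.IsCollider p ⟨i, hi⟩ h0 := by
          refine ⟨?_, hL⟩
          rw [hk]
          trivial
        rcases hCO ⟨i, hi⟩ h0 hcol with ⟨b, hbB, hdb⟩
        exact ⟨b, Or.inl (Or.inr hbB), hdb⟩
      | bidir =>
        have hcol : G.IsCollider p ⟨i, hi⟩ h0 := by
          refine ⟨?_, hL⟩
          rw [hk]
          trivial
        rcases hCO ⟨i, hi⟩ h0 hcol with ⟨b, hbB, hdb⟩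
        exact ⟨b, Or.inl (Or.inr hbB), hdb⟩

include hA hC hCO in
lemma vertsAnT : ∀ (i : ℕ) (hi : i ≤ p.n),
    p.verts ⟨i, by omega⟩ ∈ G.ancestorsOf (A ∪ B ∪ C) := by
  intro i hi
  by_cases hi0 : i = 0
  · have he : (⟨i, by omega⟩ : Fin (p.n + 1)) = 0 := Fin.ext (by simp [hi0])
    rw [he]
    exact anc_self (Or.inl (Or.inl hA))
  · by_cases hin : i = p.n
    · have he : (⟨i, by omega⟩ : Fin (p.n + 1)) = Fin.last p.n := Fin.ext (by simp [hin])
      rw [he]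
      exact anc_self (Or.inr hC)
    · have h0 : 0 < i := by omega
      have hilt : i < p.n := by omega
      cases hk : p.steps ⟨i - 1, by omega⟩ with
      | bwd =>
        have hok := p.ok ⟨i - 1, by omega⟩
        rw [hk] at hok
        have hd : G.dir (p.verts ⟨i, by omega⟩) (p.verts ⟨i - 1, by omega⟩) := by
          have e1 : (Fin.succ ⟨i - 1, by omega⟩ : Fin (p.n + 1)) = ⟨i, by omega⟩ :=
            Fin.ext (by simp; omega)
          have e2 : (Fin.castSucc ⟨i - 1, by omega⟩ : Fin (p.n + 1)) =
              ⟨i - 1, by omega⟩ := Fin.ext (by simp)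
          rw [e1, e2] at hok
          exact hok
        refine anc_step hd (Lclaim hA hCO (i - 1) (i - 1) le_rfl (by omega) ?_)
        rw [hk]
        trivial
      | fwd =>
        refine Rclaim hC hCO (p.n - i) i (by omega) le_rfl h0 ?_
        rw [hk]
        trivial
      | bidir =>
        refine Rclaim hC hCO (p.n - i) i (by omega) le_rfl h0 ?_
        rw [hk]
        trivial

end Reverse

end MG2
namespace MG2

open MixedGraph

variable {V : Type*} {G : MixedGraph V}

section Chain

variable {A B C : Set V} {p : MixedGraph.Path G}

/-- A segment of `p` with collider interior gives a `collConn` edge in the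
augmented graph of the ancestral subgraph. -/
lemma segment_collConn
    (hmem : ∀ (i : ℕ) (hi : i ≤ p.n),
      p.verts ⟨i, by omega⟩ ∈ G.ancestorsOf (A ∪ B ∪ C))
    (i j : ℕ) (hij : i < j) (hjn : j ≤ p.n)
    (hcoll : ∀ (kk : ℕ) (h1 : i < kk) (h2 : kk < j) (hklt : kk < p.n) (hk0 : 0 < kk),
      G.IsCollider p ⟨kk, hklt⟩ hk0) :
    MixedGraph.collConn (G.restrict (G.ancestorsOf (A ∪ B ∪ C)))
      (p.verts ⟨i, by omega⟩) (p.verts ⟨j, by omega⟩) := by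
  constructor
  · intro h
    have := p.inj h
    have : i = j := by simpa using congrArg Fin.val this
    omega
  · have hsok : ∀ k : Fin (j - i),
        (G.restrict (G.ancestorsOf (A ∪ B ∪ C))).stepOK
          (p.verts ⟨i + k.val, by omega⟩) (p.verts ⟨i + k.val + 1, by omega⟩)
          (p.steps ⟨i + k.val, by omega⟩) := by
      intro k
      have hok := p.ok ⟨i + k.val, by omega⟩
      have e1 : (Fin.castSucc ⟨i + k.val, by omega⟩ : Fin (p.n + 1)) =
          ⟨i + k.val, by omega⟩ := Fin.ext (by simp)
      have e2 : (Fin.succ ⟨i + k.val, by omega⟩ : Fin (p.n + 1)) =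
          ⟨i + k.val + 1, by omega⟩ := Fin.ext (by simp)
      rw [e1, e2] at hok
      cases hk : p.steps ⟨i + k.val, by omega⟩ with
      | fwd =>
        rw [hk] at hok
        exact ⟨hok, hmem _ (by omega), hmem _ (by omega)⟩
      | bwd =>
        rw [hk] at hok
        exact ⟨hok, hmem _ (by omega), hmem _ (by omega)⟩
      | bidir =>
        rw [hk] at hok
        exact ⟨hok, hmem _ (by omega), hmem _ (by omega)⟩
    refine ⟨⟨j - i, fun k => p.verts ⟨i + k.val, by omega⟩,
      fun k => p.steps ⟨i + k.val, by omega⟩, ?_, hsok⟩, ?_, ?_, ?_⟩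
    · intro k1 k2 h
      have := p.inj h
      have : i + k1.val = i + k2.val := by simpa using congrArg Fin.val this
      exact Fin.ext (by omega)
    · exact congrArg p.verts (Fin.ext (by simp))
    · exact congrArg p.verts (Fin.ext (by simp; omega))
    · intro jj hjj
      have hjjn : jj.val < j - i := jj.isLt
      have hcol := hcoll (i + jj.val) (by omega) (by omega) (by omega) (by omega)
      constructor
      · have e : (⟨i + jj.val - 1, by omega⟩ : Fin p.n) =
            ⟨i + (jj.val - 1), by omega⟩ := Fin.ext (by simp; omega)
        have := hcol.1
        rw [e] at this
        exact this
      · exact hcol.2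

/-- Extract an augmented-graph chain from an unblocked path. -/
lemma chain_extract (hBC : Disjoint B C)
    (hC : p.verts (Fin.last p.n) ∈ C)
    (hNC : ∀ (j : Fin p.n) (hj : 0 < j.val),
      ¬ G.IsCollider p j hj → p.verts j.castSucc ∉ B)
    (hmem : ∀ (i : ℕ) (hi : i ≤ p.n),
      p.verts ⟨i, by omega⟩ ∈ G.ancestorsOf (A ∪ B ∪ C)) :
    ∀ (M i j : ℕ) (hij : i < j) (hjn : j ≤ p.n) (hM : p.n - j ≤ M)
      (hiB : p.verts ⟨i, by omega⟩ ∉ B),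
      (∀ (kk : ℕ) (h1 : i < kk) (h2 : kk < j) (hklt : kk < p.n) (hk0 : 0 < kk),
        G.IsCollider p ⟨kk, hklt⟩ hk0) →
      Relation.ReflTransGen
        (fun u v => MixedGraph.collConn
          (G.restrict (G.ancestorsOf (A ∪ B ∪ C))) u v ∧ u ∉ B ∧ v ∉ B)
        (p.verts ⟨i, by omega⟩) (p.verts ⟨p.n, by omega⟩) := by
  have hnB : p.verts ⟨p.n, by omega⟩ ∉ B := by
    have he : (⟨p.n, by omega⟩ : Fin (p.n + 1)) = Fin.last p.n := Fin.ext (by simp)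
    rw [he]
    exact Set.disjoint_right.mp hBC hC
  intro M
  induction M with
  | zero =>
    intro i j hij hjn hM hiB hcoll
    have hjn' : j = p.n := by omega
    have e : (⟨j, by omega⟩ : Fin (p.n + 1)) = ⟨p.n, by omega⟩ :=
      Fin.ext (by simp [hjn'])
    refine Relation.ReflTransGen.single ⟨?_, hiB, hnB⟩
    rw [← e]
    exact segment_collConn hmem i j hij hjn hcoll
  | succ M ih =>
    intro i j hij hjn hM hiB hcoll
    by_cases hjn' : j = p.n
    · have e : (⟨j, by omega⟩ : Fin (p.n + 1)) = ⟨p.n, by omega⟩ :=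
        Fin.ext (by simp [hjn'])
      refine Relation.ReflTransGen.single ⟨?_, hiB, hnB⟩
      rw [← e]
      exact segment_collConn hmem i j hij hjn hcoll
    · have hjlt : j < p.n := by omega
      by_cases hcol : G.IsCollider p ⟨j, hjlt⟩ (by show 0 < j; omega)
      · refine ih i (j + 1) (by omega) (by omega) (by omega) hiB ?_
        intro kk h1 h2 hklt hk0
        rcases Nat.lt_or_ge kk j with h | h
        · exact hcoll kk h1 h hklt hk0
        · have : kk = j := by omega
          subst this
          exact hcol
      · have hjB : p.verts ⟨j, by omega⟩ ∉ B := by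
          have := hNC ⟨j, hjlt⟩ (by show 0 < j; omega) hcol
          exact this
        refine Relation.ReflTransGen.head
          ⟨segment_collConn hmem i j hij (by omega) hcoll, hiB, hjB⟩ ?_
        refine ih j (j + 1) (by omega) (by omega) (by omega) hjB ?_
        intro kk h1 h2 hklt hk0
        omega
      
end Chain

end MG2
/-- m-separation in an ADMG is equivalent to separation in the
augmented graph of the ancestral induced subgraph. -/
theorem stmt2 {V : Type*} [Fintype V] (G : MixedGraph V) (hacyc : G.Acyclic)
    (A B C : Set V) (hAB : Disjoint A B) (hAC : Disjoint A C) (hBC : Disjoint B C) :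
    G.MSep A C B ↔
      USep (MixedGraph.collConn (G.restrict (G.ancestorsOf (A ∪ B ∪ C)))) A C B := by
  constructor
  · -- m-separation implies separation in the augmented ancestral graph
    intro hms a ha c hc hrt
    rcases MG2.chain_to_walk (A := A) (B := B) (C := C) hrt with ⟨ω, hω⟩
    cases ω with
    | nil => exact Set.disjoint_left.mp hAC ha hc
    | @cons a x c k0 h0 w =>
      have hconn : MG2.Walk.Conn (· ∈ G.ancestorsOf (A ∪ B ∪ C)) (· ∉ B)
          (MG2.Walk.cons k0 h0 w) := (hω k0).2
      rcases MG2.step2 hAC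
          (MG2.Walk.badW (fun v => ∃ b ∈ B, G.descends v b) (MG2.Walk.cons k0 h0 w))
          a c ha hc (MG2.Walk.cons k0 h0 w) hconn le_rfl with
        ⟨a', ha', c', hc', ω', hconn'⟩
      have hPC : ∀ x y, G.dir x y → (∃ b ∈ B, G.descends y b) →
          (∃ b ∈ B, G.descends x b) := by
        rintro x y hxy ⟨b, hb, hd⟩
        exact ⟨b, hb, Relation.ReflTransGen.head hxy hd⟩
      rcases MG2.Walk.toNodup hacyc hPC ω'.length ω' le_rfl hconn' with
        ⟨ω'', hconn'', hnd⟩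
      have hne : a' ≠ c' := fun h => Set.disjoint_left.mp hAC ha' (h ▸ hc')
      rcases MG2.exists_unblocked_path hne ω'' hconn'' hnd with ⟨p, h0p, hlp, hnbl⟩
      exact hnbl (hms p (h0p ▸ ha') (hlp ▸ hc'))
  · -- separation in the augmented ancestral graph implies m-separation
    intro hus p h0 hl
    by_contra hnb
    have hNC : ∀ (j : Fin p.n) (hj : 0 < j.val),
        ¬ G.IsCollider p j hj → p.verts j.castSucc ∉ B := by
      intro j hj hcol hb
      exact hnb ⟨j, hj, Or.inl ⟨hcol, hb⟩⟩
    have hCO : ∀ (j : Fin p.n) (hj : 0 < j.val),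
        G.IsCollider p j hj → ∃ b ∈ B, G.descends (p.verts j.castSucc) b := by
      intro j hj hcol
      by_contra hb
      push_neg at hb
      exact hnb ⟨j, hj, Or.inr ⟨hcol, hb⟩⟩
    have hmem := MG2.vertsAnT (A := A) (B := B) (C := C) h0 hl hCO
    have hn : 0 < p.n := by
      by_contra h
      have hn0 : p.n = 0 := by omega
      have he : (0 : Fin (p.n + 1)) = Fin.last p.n := Fin.ext (by simp [hn0])
      exact Set.disjoint_left.mp hAC h0 (by rw [he]; exact hl)
    have hB0 : p.verts ⟨0, by omega⟩ ∉ B := by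
      have he : (0 : Fin (p.n + 1)) = ⟨0, by omega⟩ := Fin.ext (by simp)
      rw [← he]
      exact Set.disjoint_left.mp hAB h0
    have hchain := MG2.chain_extract hBC hl hNC hmem (p.n - 1) 0 1 (by omega)
      (by omega) (by omega) hB0 (fun kk h1 h2 hklt hk0 => absurd h2 (by omega))
    have e0 : (⟨0, by omega⟩ : Fin (p.n + 1)) = 0 := Fin.ext (by simp)
    have en : (⟨p.n, by omega⟩ : Fin (p.n + 1)) = Fin.last p.n := Fin.ext (by simp)
    rw [e0, en] at hchain
    exact hus (p.verts 0) h0 (p.verts (Fin.last p.n)) hl hchain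
end

section
/- Let G be a DAG over a finite node set V ∪ L (disjoint) and let G_V denote the latent projection of G onto V. Then for all pairwise disjoint A, B, C ⊆ V, A and C are d-separated by B in G if and only if A and C are m-separated by B in G_V. -/
/-- Directed reachability through latent nodes only. -/
def thruL {V L : Type*} (G : MixedGraph (V ⊕ L)) : L → L → Prop :=
  Relation.ReflTransGen (fun a b : L => G.dir (Sum.inr a) (Sum.inr b))

/-- Latent projection of a DAG over `V ⊕ L` onto `V`: directed edge `v → w` iff
there is a directed path from `v` to `w` all of whose intermediate nodes are
latent; bi-directed edge `v ↔ w` iff some latent node has directed paths (through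
latents) to both `v` and `w`. -/
def latentProj {V L : Type*} (G : MixedGraph (V ⊕ L)) : MixedGraph V where
  dir v w := G.dir (Sum.inl v) (Sum.inl w) ∨
    ∃ a b : L, G.dir (Sum.inl v) (Sum.inr a) ∧ thruL G a b ∧ G.dir (Sum.inr b) (Sum.inl w)
  bi v w := ∃ u a b : L, thruL G u a ∧ G.dir (Sum.inr a) (Sum.inl v) ∧
    thruL G u b ∧ G.dir (Sum.inr b) (Sum.inl w)

/-! Both separations are restated through active walks: walks, possibly revisiting vertices,
whose non-colliders avoid `B` and whose colliders have a descendant in `B`; cutting out loops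
shortens an active walk to an active path. An active walk of the latent projection lifts to one of
`G` by replacing each edge with the latent path it comes from, whose latent nodes are
non-colliders. Conversely, rerouting an active walk of `G` through a detour down to `B` and back
makes all its colliders lie in `B`; then its latent stretches contain no collider, so each reads
`← ⋯ ← → ⋯ →`, `← ⋯ ←` or `→ ⋯ →` and collapses to a single edge of the projection with the
same arrowheads at its ends. -/

lemma List.exists_eq_append_cons_append_cons_of_not_nodup_map {α β : Type*} {f : α → β}
    {l : List α} (h : ¬ (l.map f).Nodup) :
    ∃ l₁ x l₂ y l₃, f x = f y ∧ l = l₁ ++ x :: (l₂ ++ y :: l₃) := by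
  simp only [List.nodup_iff_sublist, not_forall, not_not, List.sublist_map_iff] at h
  obtain ⟨a, l', hl', hmap⟩ := h
  obtain ⟨x, y, rfl, hxy⟩ : ∃ x y, l' = [x, y] ∧ f x = f y := by
    rcases l' with _ | ⟨x, _ | ⟨y, _ | _⟩⟩ <;> grind
  obtain ⟨r₁, r₂, rfl, hxr, hyr⟩ := List.cons_sublist_iff.1 hl'
  obtain ⟨l₁, l₂, rfl⟩ := List.append_of_mem hxr
  obtain ⟨l₂', l₃, rfl⟩ := List.append_of_mem (List.singleton_sublist.1 hyr)
  exact ⟨l₁, x, l₂ ++ l₂', y, l₃, hxy, by simp⟩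

lemma List.exists_rel_reflTransGen_of_isChain {α : Type*} {r : α → α → Prop} {a b : α}
    {l : List α} (h : (a :: (l ++ [b])).IsChain r) : ∃ c, r a c ∧ Relation.ReflTransGen r c b := by
  cases l with
  | nil => exact ⟨b, List.isChain_pair.1 h, .refl⟩
  | cons c l =>
    obtain ⟨hac, hc⟩ := List.isChain_cons_cons.1 h
    exact ⟨c, hac, List.relationReflTransGen_of_exists_isChain_cons _ hc (by simp)⟩

lemma Relation.reflTransGen_of_forall_castSucc_succ {α : Type*} {r : α → α → Prop} {n : ℕ}
    {f : Fin (n + 1) → α} (h : ∀ i : Fin n, r (f i.castSucc) (f i.succ)) :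
    Relation.ReflTransGen r (f 0) (f (Fin.last n)) := by
  have hchain : (List.ofFn f).IsChain r := List.isChain_ofFn.2 fun i hi => h ⟨i, by omega⟩
  have := List.relationReflTransGen_of_exists_isChain _ hchain (by simp)
  rwa [List.head_ofFn, List.getLast_ofFn] at this

namespace StepKind

def HeadToHead (s t : StepKind) : Prop := s.headRight ∧ t.headLeft

@[simp] lemma not_headToHead_bwd (t : StepKind) : ¬ HeadToHead .bwd t := fun h => h.1

@[simp] lemma not_headToHead_fwd (s : StepKind) : ¬ HeadToHead s .fwd := fun h => h.2

lemma eq_fwd_of_not_headLeft {t : StepKind} (h : ¬ t.headLeft) : t = .fwd := by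
  cases t <;> simp_all [headLeft]

lemma eq_bwd_of_not_headRight {t : StepKind} (h : ¬ t.headRight) : t = .bwd := by
  cases t <;> simp_all [headRight]

end StepKind

namespace MixedGraph

variable {V : Type*} (G : MixedGraph V) (B : Set V)

def ActiveAt (s : StepKind) (v : V) (t : StepKind) : Prop :=
  (s.HeadToHead t → ∃ b ∈ B, G.descends v b) ∧ (¬ s.HeadToHead t → v ∉ B)

/-- Walks are chains of entries `(k, x)`, recording that the walk arrives at `x` by a step of
kind `k`; a walk from `a` starts with the entry `(.bwd, a)`, which has no arrowhead at `a`. -/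
def ActiveLink (e f : StepKind × V) : Prop :=
  G.stepOK e.2 f.2 f.1 ∧ G.ActiveAt B e.1 e.2 f.1

def ActivelyConnected (a c : V) : Prop :=
  ∃ t, Relation.ReflTransGen (G.ActiveLink B) (.bwd, a) (t, c)

variable {G B}

lemma activeAt_of_notMem {s t : StepKind} {v : V} (hst : ¬ s.HeadToHead t) (hv : v ∉ B) :
    G.ActiveAt B s v t :=
  ⟨fun h => absurd h hst, fun _ => hv⟩

lemma activeAt_congr {s s' t t' : StepKind} {v : V} (hs : s.headRight ↔ s'.headRight)
    (ht : t.headLeft ↔ t'.headLeft) : G.ActiveAt B s v t ↔ G.ActiveAt B s' v t' := by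
  have : s.HeadToHead t ↔ s'.HeadToHead t' := and_congr hs ht
  simp only [ActiveAt, this]

lemma Path.activelyConnected (p : G.Path) (h0 : p.verts 0 ∉ B) (hp : ¬ G.Blocked p B) :
    G.ActivelyConnected B (p.verts 0) (p.verts (Fin.last p.n)) := by
  let kind (i : Fin (p.n + 1)) : StepKind :=
    if hi : i.val = 0 then .bwd else p.steps ⟨i.val - 1, by omega⟩
  refine ⟨kind (Fin.last p.n), Relation.reflTransGen_of_forall_castSucc_succ
    (f := fun i => (kind i, p.verts i)) fun i => ⟨p.ok i, ?_⟩⟩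
  by_cases hi : i.val = 0
  · have hk : kind i.castSucc = .bwd := dif_pos hi
    have h0' : i.castSucc = 0 := Fin.ext hi
    exact activeAt_of_notMem (by simp [hk]) (h0' ▸ h0)
  · have hk : kind i.castSucc = p.steps ⟨i.val - 1, by omega⟩ := dif_neg hi
    have hcoll : G.IsCollider p i (Nat.pos_of_ne_zero hi) ↔
        (kind i.castSucc).HeadToHead (p.steps i) := by
      rw [hk]; rfl
    refine ⟨fun h => by_contra fun hno => ?_, fun h hv => ?_⟩
    · exact hp ⟨i, _, Or.inr ⟨hcoll.2 h, fun b hb hd => hno ⟨b, hb, hd⟩⟩⟩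
    · exact hp ⟨i, _, Or.inl ⟨mt hcoll.1 h, hv⟩⟩

lemma exists_descends_of_reflTransGen_fwd {y x : V} {t : StepKind}
    (h : Relation.ReflTransGen (G.ActiveLink B) (.fwd, y) (t, x)) (ht : t ≠ .fwd) :
    ∃ b ∈ B, G.descends y b := by
  suffices ∀ e, Relation.ReflTransGen (G.ActiveLink B) e (t, x) → e.1 = .fwd →
      ∃ b ∈ B, G.descends e.2 b from this _ h rfl
  intro e he
  induction he using Relation.ReflTransGen.head_induction_on with
  | refl => exact fun h => absurd h ht
  | @head e f hef _ ih =>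
    intro he
    by_cases hf : f.1 = .fwd
    · obtain ⟨b, hb, hfb⟩ := ih hf
      have hdir : G.dir e.2 f.2 := by simpa [hf, stepOK] using hef.1
      exact ⟨b, hb, .head hdir hfb⟩
    · refine hef.2.1 ⟨?_, ?_⟩
      · rw [he]; trivial
      · by_contra hl; exact hf (StepKind.eq_fwd_of_not_headLeft hl)

lemma ActiveLink.of_loop {s t : StepKind} {v : V} {f g : StepKind × V}
    (h₁ : G.ActiveLink B (s, v) f) (hloop : Relation.ReflTransGen (G.ActiveLink B) f (t, v))
    (h₂ : G.ActiveLink B (t, v) g) : G.ActiveLink B (s, v) g := by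
  refine ⟨h₂.1, fun hsg => ?_, fun hsg => ?_⟩
  · by_cases hv : v ∈ B
    · exact ⟨v, hv, .refl⟩
    by_cases hsf : s.HeadToHead f.1
    · exact h₁.2.1 hsf
    by_cases htg : t.HeadToHead g.1
    · exact h₂.2.1 htg
    -- Otherwise the loop leaves `v` forwards and comes back backwards, so it turns somewhere.
    have hf : f.1 = .fwd := StepKind.eq_fwd_of_not_headLeft fun hl => hsf ⟨hsg.1, hl⟩
    have ht : t = .bwd := StepKind.eq_bwd_of_not_headRight fun hr => htg ⟨hr, hsg.2⟩
    obtain ⟨y, f⟩ := f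
    obtain rfl : y = .fwd := hf
    obtain ⟨b, hb, hfb⟩ := exists_descends_of_reflTransGen_fwd hloop (by simp [ht])
    exact ⟨b, hb, .head h₁.1 hfb⟩
  · by_cases hs : s.headRight
    · exact h₂.2.2 fun htg => hsg ⟨hs, htg.2⟩
    · exact h₁.2.2 fun hsf => hs hsf.1

lemma exists_isChain_activeLink_nodup (W : List (StepKind × V))
    (hW : W.IsChain (G.ActiveLink B)) :
    ∃ W' : List (StepKind × V), W'.IsChain (G.ActiveLink B) ∧ W'.head? = W.head? ∧
      (W'.map Prod.snd).getLast? = (W.map Prod.snd).getLast? ∧ (W'.map Prod.snd).Nodup := by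
  induction h : W.length using Nat.strong_induction_on generalizing W with
  | _ n ih =>
  by_cases hnd : (W.map Prod.snd).Nodup
  · exact ⟨W, hW, rfl, rfl, hnd⟩
  obtain ⟨W₁, ⟨s, v⟩, W₂, ⟨t, v'⟩, W₃, rfl : v = v', rfl⟩ :=
    List.exists_eq_append_cons_append_cons_of_not_nodup_map hnd
  obtain ⟨hW₁, hW₂⟩ := List.isChain_split.1 hW
  have hcut : (W₁ ++ (s, v) :: W₃).IsChain (G.ActiveLink B) := by
    cases W₃ with
    | nil => exact hW₁
    | cons g W₃ =>
      rw [← List.cons_append, List.isChain_append_cons_cons] at hW₂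
      obtain ⟨hloop, h₂, hW₃⟩ := hW₂
      obtain ⟨f, h₁, hft⟩ := List.exists_rel_reflTransGen_of_isChain hloop
      exact List.isChain_append_cons_cons.2 ⟨hW₁, h₁.of_loop hft h₂, hW₃⟩
  obtain ⟨W', hW', hhead, hlast, hnd'⟩ := ih _ (by simp [← h]) _ hcut rfl
  refine ⟨W', hW', by simp [hhead], ?_, hnd'⟩
  rw [hlast]
  cases W₃ <;> simp [List.getLast?_cons]

lemma exists_path_of_isChain {e : StepKind × V} {l : List (StepKind × V)}
    (hW : (e :: l).IsChain (G.ActiveLink B)) (hnd : ((e :: l).map Prod.snd).Nodup) :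
    ∃ p : G.Path, p.verts 0 = e.2 ∧
      p.verts (Fin.last p.n) = ((e :: l).getLast (List.cons_ne_nil _ _)).2 ∧
      ¬ G.Blocked p B := by
  refine ⟨⟨l.length, fun i => ((e :: l)[i.val]).2, fun i => (l[i.val]).1, fun i j hij => ?_,
    fun i => (hW.getElem i (by simp)).1⟩, rfl, by simp [List.getLast_eq_getElem], ?_⟩
  · have hij' : ((e :: l).map Prod.snd)[i.val]'(by simpa using i.isLt) =
        ((e :: l).map Prod.snd)[j.val]'(by simpa using j.isLt) := by
      simpa only [List.getElem_map] using hij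
    exact Fin.ext ((List.Nodup.getElem_inj_iff hnd).1 hij')
  · rintro ⟨⟨_ | j, hj⟩, hpos, hblock⟩
    · exact absurd hpos (lt_irrefl 0)
    have hlink := (hW.getElem (j + 1) (by simpa using hj)).2
    rcases hblock with ⟨hnc, hv⟩ | ⟨hc, hnd⟩
    · exact hnc (by_contra fun hc => hlink.2 hc hv)
    · obtain ⟨b, hb, hd⟩ := hlink.1 hc
      exact hnd b hb hd

lemma ActivelyConnected.exists_path {a c : V} (h : G.ActivelyConnected B a c) :
    ∃ p : G.Path, p.verts 0 = a ∧ p.verts (Fin.last p.n) = c ∧ ¬ G.Blocked p B := by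
  obtain ⟨t, h⟩ := h
  obtain ⟨l, hl, hlast⟩ := List.exists_isChain_cons_of_relationReflTransGen h
  obtain ⟨_ | ⟨e, W⟩, hW, hhead, hlast', hnd⟩ := exists_isChain_activeLink_nodup _ hl
  · simp at hhead
  obtain rfl : e = (.bwd, a) := by simpa using hhead
  obtain ⟨p, h0, hp, hblock⟩ := exists_path_of_isChain hW hnd
  have hc : (((.bwd, a) :: l).map Prod.snd).getLast? = some c := by
    rw [List.getLast?_map, List.getLast?_eq_some_getLast (List.cons_ne_nil _ _), hlast]; rfl
  rw [hc, List.getLast?_map, List.getLast?_eq_some_getLast (List.cons_ne_nil _ _)] at hlast'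
  exact ⟨p, h0, hp.trans (Option.some_injective _ hlast'), hblock⟩

theorem msep_iff_forall_not_activelyConnected {A C : Set V} (hAB : Disjoint A B) :
    G.MSep A C B ↔ ∀ a ∈ A, ∀ c ∈ C, ¬ G.ActivelyConnected B a c := by
  refine ⟨fun hsep a ha c hc hac => ?_, fun h p h0 hl => by_contra fun hp => ?_⟩
  · obtain ⟨p, rfl, rfl, hp⟩ := hac.exists_path
    exact hp (hsep p ha hc)
  · exact h _ h0 _ hl (p.activelyConnected (Set.disjoint_left.1 hAB h0) hp)

variable (G B) in
def TightLink (e f : StepKind × V) : Prop :=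
  G.ActiveLink B e f ∧ (e.1.HeadToHead f.1 → e.2 ∈ B)

lemma TightLink.of_notMem {k : StepKind} {x : V} {f : StepKind × V} (hf : G.stepOK x f.2 f.1)
    (hx : x ∉ B) (hk : ¬ k.HeadToHead f.1) : G.TightLink B (k, x) f :=
  ⟨⟨hf, activeAt_of_notMem hk hx⟩, fun h => absurd h hk⟩

/-- From `x ∉ B`, walk down to the first vertex of `B` below `x` and straight back up; the only
collider of this detour lies in `B`. -/
lemma reflTransGen_tightLink_detour {x b : V} (hxb : G.descends x b) (hb : b ∈ B) (hx : x ∉ B)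
    (k : StepKind) : Relation.ReflTransGen (G.TightLink B) (k, x) (.bwd, x) := by
  induction hxb using Relation.ReflTransGen.head_induction_on generalizing k with
  | refl => exact absurd hb hx
  | @head x z hxz _ ih =>
    have hdown : G.TightLink B (k, x) (.fwd, z) := .of_notMem hxz hx (by simp)
    by_cases hz : z ∈ B
    · have hup : G.TightLink B (.fwd, z) (.bwd, x) :=
        ⟨⟨hxz, fun _ => ⟨z, hz, .refl⟩, fun h => absurd ⟨trivial, trivial⟩ h⟩, fun _ => hz⟩
      exact .head hdown (.single hup)
    · exact .head hdown ((ih hz .fwd).tail (.of_notMem hxz hz (by simp)))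

lemma reflTransGen_tightLink_of_activeLink {e f : StepKind × V} (h : G.ActiveLink B e f) :
    Relation.ReflTransGen (G.TightLink B) e f := by
  by_cases hc : e.1.HeadToHead f.1 ∧ e.2 ∉ B
  · obtain ⟨b, hb, hd⟩ := h.2.1 hc.1
    exact (reflTransGen_tightLink_detour hd hb hc.2 e.1).tail (.of_notMem h.1 hc.2 (by simp))
  · exact .single ⟨h, fun h' => by_contra fun hn => hc ⟨h', hn⟩⟩

open Sum (inl inr)

variable {L : Type*} {G : MixedGraph (V ⊕ L)}

lemma reflTransGen_dir_of_thruL {a b : L} (h : thruL G a b) :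
    Relation.ReflTransGen G.dir (inr a) (inr b) :=
  Relation.ReflTransGen.lift inr (fun _ _ h => h) _ _ h

lemma descends_latentProj_iff {v w : V} :
    (latentProj G).descends v w ↔ G.descends (inl v) (inl w) := by
  refine ⟨fun h => ?_, fun h => ?_⟩
  · induction h with
    | refl => exact .refl
    | tail _ huw ih =>
      rcases huw with huw | ⟨a, b, hua, hab, hbw⟩
      · exact ih.tail huw
      · exact ((ih.tail hua).trans (reflTransGen_dir_of_thruL hab)).tail hbw
  · suffices ∀ y, G.descends y (inl w) → Sum.elim (fun u => (latentProj G).descends u w)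
        (fun x => ∃ b u, thruL G x b ∧ G.dir (inr b) (inl u) ∧ (latentProj G).descends u w) y from
      this _ h
    intro y hy
    induction hy using Relation.ReflTransGen.head_induction_on with
    | refl => exact .refl
    | @head y z hyz _ ih =>
      rcases y with u | x <;> rcases z with u' | x'
      · exact .head (Or.inl hyz) ih
      · obtain ⟨b, u', hxb, hbu, hu⟩ := ih
        exact .head (Or.inr ⟨x', b, hyz, hxb, hbu⟩) hu
      · exact ⟨x, u', .refl, hyz, ih⟩
      · obtain ⟨b, u, hxb, hbu, hu⟩ := ih
        exact ⟨b, u, .head hyz hxb, hbu, hu⟩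

lemma activeAt_latentProj_iff {s t : StepKind} {v : V} :
    (latentProj G).ActiveAt B s v t ↔ G.ActiveAt (inl '' B) s (inl v) t := by
  simp only [ActiveAt, Set.exists_mem_image, descends_latentProj_iff,
    Sum.inl_injective.mem_set_image]

lemma inr_notMem_image_inl (x : L) : (inr x : V ⊕ L) ∉ inl '' B := by simp

lemma reflTransGen_activeLink_fwd_run {x y : L} {z : V ⊕ L} (hxy : thruL G x y)
    (hyz : G.dir (inr y) z) (k : StepKind) :
    Relation.ReflTransGen (G.ActiveLink (inl '' B)) (k, inr x) (.fwd, z) := by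
  induction hxy using Relation.ReflTransGen.head_induction_on generalizing k with
  | refl => exact .single ⟨hyz, activeAt_of_notMem (by simp) (inr_notMem_image_inl _)⟩
  | @head x x' hxx' _ ih =>
    have hlink : G.ActiveLink (inl '' B) (k, inr x) (.fwd, inr x') :=
      ⟨hxx', activeAt_of_notMem (by simp) (inr_notMem_image_inl _)⟩
    exact .head hlink (ih .fwd)

lemma reflTransGen_activeLink_bwd_run {x y : L} (hxy : thruL G x y) :
    Relation.ReflTransGen (G.ActiveLink (inl '' B)) (.bwd, inr y) (.bwd, inr x) := by
  induction hxy with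
  | refl => exact .refl
  | @tail c y _ hcy ih =>
    have hlink : G.ActiveLink (inl '' B) (.bwd, inr y) (.bwd, inr c) :=
      ⟨hcy, activeAt_of_notMem (by simp) (inr_notMem_image_inl _)⟩
    exact .head hlink ih

lemma exists_reflTransGen_activeLink_of_latentProj {s s' t : StepKind} {v w : V}
    (hs : s.headRight ↔ s'.headRight) (h : (latentProj G).ActiveLink B (s, v) (t, w)) :
    ∃ t', (t'.headRight ↔ t.headRight) ∧
      Relation.ReflTransGen (G.ActiveLink (inl '' B)) (s', inl v) (t', inl w) := by
  obtain ⟨hvw, hact⟩ := h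
  have hstart {k : StepKind} (hk : t.headLeft ↔ k.headLeft) {z : V ⊕ L}
      (hz : G.stepOK (inl v) z k) : G.ActiveLink (inl '' B) (s', inl v) (k, z) :=
    ⟨hz, activeAt_latentProj_iff.1 ((activeAt_congr hs hk).1 hact)⟩
  cases t with
  | fwd =>
    refine ⟨.fwd, Iff.rfl, ?_⟩
    rcases hvw with hvw | ⟨a, b, hva, hab, hbw⟩
    · exact .single (hstart Iff.rfl hvw)
    · exact .head (hstart Iff.rfl hva) (reflTransGen_activeLink_fwd_run hab hbw .fwd)
  | bwd =>
    refine ⟨.bwd, Iff.rfl, ?_⟩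
    rcases hvw with hwv | ⟨a, b, hwa, hab, hbv⟩
    · exact .single (hstart Iff.rfl hwv)
    · exact .head (hstart Iff.rfl hbv) ((reflTransGen_activeLink_bwd_run hab).tail
        ⟨hwa, activeAt_of_notMem (by simp) (inr_notMem_image_inl _)⟩)
  | bidir =>
    obtain ⟨u, a, b, hua, hav, hub, hbw⟩ := hvw
    exact ⟨.fwd, Iff.rfl, .head (hstart (k := .bwd) Iff.rfl hav)
      ((reflTransGen_activeLink_bwd_run hua).trans
        (reflTransGen_activeLink_fwd_run hub hbw .bwd))⟩

lemma ActivelyConnected.of_latentProj {a c : V} (h : (latentProj G).ActivelyConnected B a c) :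
    G.ActivelyConnected (inl '' B) (inl a) (inl c) := by
  obtain ⟨t, h⟩ := h
  suffices ∀ e, Relation.ReflTransGen ((latentProj G).ActiveLink B) (.bwd, a) e →
      ∃ t', (t'.headRight ↔ e.1.headRight) ∧
        Relation.ReflTransGen (G.ActiveLink (inl '' B)) (.bwd, inl a) (t', inl e.2) by
    obtain ⟨t', -, h'⟩ := this _ h
    exact ⟨t', h'⟩
  intro e he
  induction he with
  | refl => exact ⟨.bwd, Iff.rfl, .refl⟩
  | tail _ hef ih =>
    obtain ⟨t', ht', h'⟩ := ih
    obtain ⟨t'', ht'', h''⟩ := exists_reflTransGen_activeLink_of_latentProj ht'.symm hef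
    exact ⟨t'', ht'', h'.trans h''⟩

variable (G) in
/-- A walk that has left the observed `v` and travelled through latent nodes only up to `x` has
so far traced out a partial edge of the latent projection of kind `T`: forwards only (`fwd`),
backwards only (`bwd`), or backwards up to a latent source `u` and then forwards (`bidir`). -/
def LatentRun (v : V) (x : L) : StepKind → Prop
  | .fwd => ∃ a, G.dir (inl v) (inr a) ∧ thruL G a x
  | .bwd => ∃ b, thruL G x b ∧ G.dir (inr b) (inl v)
  | .bidir => ∃ u b, thruL G u b ∧ G.dir (inr b) (inl v) ∧ thruL G u x

lemma stepOK_latentProj_of_stepOK (hbi : ∀ u v, ¬ G.bi u v) {v w : V} {k : StepKind}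
    (h : G.stepOK (inl v) (inl w) k) : (latentProj G).stepOK v w k := by
  cases k with
  | fwd | bwd => exact Or.inl h
  | bidir => exact absurd h (hbi _ _)

lemma latentRun_of_stepOK (hbi : ∀ u v, ¬ G.bi u v) {v : V} {a : L} {k : StepKind}
    (h : G.stepOK (inl v) (inr a) k) : G.LatentRun v a k := by
  cases k with
  | fwd => exact ⟨a, h, .refl⟩
  | bwd => exact ⟨a, .refl, h⟩
  | bidir => exact absurd h (hbi _ _)

lemma LatentRun.extend (hbi : ∀ u v, ¬ G.bi u v) {v : V} {x y : L} {T k : StepKind}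
    (hT : G.LatentRun v x T) (h : G.stepOK (inr x) (inr y) k) (hTk : ¬ T.HeadToHead k) :
    ∃ T', G.LatentRun v y T' ∧ (T.headLeft ↔ T'.headLeft) ∧ (T'.headRight ↔ k.headRight) := by
  cases k with
  | bidir => exact absurd h (hbi _ _)
  | fwd =>
    cases T with
    | fwd =>
      obtain ⟨a, hva, hax⟩ := hT
      exact ⟨.fwd, ⟨a, hva, hax.tail h⟩, Iff.rfl, Iff.rfl⟩
    | bwd =>
      obtain ⟨b, hxb, hbv⟩ := hT
      exact ⟨.bidir, ⟨x, b, hxb, hbv, .single h⟩, Iff.rfl, Iff.rfl⟩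
    | bidir =>
      obtain ⟨u, b, hub, hbv, hux⟩ := hT
      exact ⟨.bidir, ⟨u, b, hub, hbv, hux.tail h⟩, Iff.rfl, Iff.rfl⟩
  | bwd =>
    cases T with
    | bwd =>
      obtain ⟨b, hxb, hbv⟩ := hT
      exact ⟨.bwd, ⟨b, .head h hxb, hbv⟩, Iff.rfl, Iff.rfl⟩
    | fwd | bidir => exact absurd ⟨trivial, trivial⟩ hTk

lemma LatentRun.close (hbi : ∀ u v, ¬ G.bi u v) {v w : V} {x : L} {T k : StepKind}
    (hT : G.LatentRun v x T) (h : G.stepOK (inr x) (inl w) k) (hTk : ¬ T.HeadToHead k) :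
    ∃ T', (latentProj G).stepOK v w T' ∧ (T.headLeft ↔ T'.headLeft) ∧
      (T'.headRight ↔ k.headRight) := by
  cases k with
  | bidir => exact absurd h (hbi _ _)
  | fwd =>
    cases T with
    | fwd =>
      obtain ⟨a, hva, hax⟩ := hT
      exact ⟨.fwd, Or.inr ⟨a, x, hva, hax, h⟩, Iff.rfl, Iff.rfl⟩
    | bwd =>
      obtain ⟨b, hxb, hbv⟩ := hT
      exact ⟨.bidir, ⟨x, b, x, hxb, hbv, .refl, h⟩, Iff.rfl, Iff.rfl⟩
    | bidir =>
      obtain ⟨u, b, hub, hbv, hux⟩ := hT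
      exact ⟨.bidir, ⟨u, b, x, hub, hbv, hux, h⟩, Iff.rfl, Iff.rfl⟩
  | bwd =>
    cases T with
    | bwd =>
      obtain ⟨b, hxb, hbv⟩ := hT
      exact ⟨.bwd, Or.inr ⟨x, b, h, hxb, hbv⟩, Iff.rfl, Iff.rfl⟩
    | fwd | bidir => exact absurd ⟨trivial, trivial⟩ hTk

variable (G B) in
/-- Invariant for projecting a tight walk of `G` from `(.bwd, inl a)` onto the latent projection:
at an observed entry the projected walk has reached the same vertex; at a latent entry it has
reached the last observed vertex `v` of the walk, which is followed by a pending latent run. -/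
def Projectable (a : V) : StepKind × (V ⊕ L) → Prop
  | (k, inl w) => ∃ k', Relation.ReflTransGen ((latentProj G).ActiveLink B) (.bwd, a) (k', w) ∧
      (k'.headRight ↔ k.headRight)
  | (k, inr x) => ∃ k' v T,
      Relation.ReflTransGen ((latentProj G).ActiveLink B) (.bwd, a) (k', v) ∧
      (latentProj G).ActiveAt B k' v T ∧ G.LatentRun v x T ∧ (T.headRight ↔ k.headRight)

lemma Projectable.tightLink (hbi : ∀ u v, ¬ G.bi u v) {a : V} {e f : StepKind × (V ⊕ L)}
    (he : G.Projectable B a e) (h : G.TightLink (inl '' B) e f) : G.Projectable B a f := by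
  obtain ⟨⟨hstep, hact⟩, htight⟩ := h
  obtain ⟨k, y⟩ := e
  obtain ⟨t, z⟩ := f
  rcases y with v | x
  · obtain ⟨k', hwalk, hk'⟩ := he
    have hact' : (latentProj G).ActiveAt B k' v t :=
      activeAt_latentProj_iff.2 ((activeAt_congr hk'.symm Iff.rfl).1 hact)
    rcases z with w | a
    · exact ⟨t, hwalk.tail ⟨stepOK_latentProj_of_stepOK hbi hstep, hact'⟩, Iff.rfl⟩
    · exact ⟨k', v, t, hwalk, hact', latentRun_of_stepOK hbi hstep, Iff.rfl⟩
  · obtain ⟨k', v, T, hwalk, hact', hrun, hT⟩ := he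
    have hTt : ¬ T.HeadToHead t := fun hTt =>
      inr_notMem_image_inl x (htight ⟨hT.1 hTt.1, hTt.2⟩)
    rcases z with w | y
    · obtain ⟨T', hvw, hL, hR⟩ := hrun.close hbi hstep hTt
      exact ⟨T', hwalk.tail ⟨hvw, (activeAt_congr Iff.rfl hL).1 hact'⟩, hR⟩
    · obtain ⟨T', hrun', hL, hR⟩ := hrun.extend hbi hstep hTt
      exact ⟨k', v, T', hwalk, (activeAt_congr Iff.rfl hL).1 hact', hrun', hR⟩

lemma ActivelyConnected.latentProj (hbi : ∀ u v, ¬ G.bi u v) {a c : V}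
    (h : G.ActivelyConnected (inl '' B) (inl a) (inl c)) :
    (latentProj G).ActivelyConnected B a c := by
  obtain ⟨t, h⟩ := h
  have htight :=
    Relation.reflTransGen_closed (fun _ _ => reflTransGen_tightLink_of_activeLink) _ _ h
  have hproj : ∀ e, Relation.ReflTransGen (G.TightLink (inl '' B)) (.bwd, inl a) e →
      G.Projectable B a e := by
    intro e he
    induction he with
    | refl => exact ⟨.bwd, .refl, Iff.rfl⟩
    | tail _ hef ih => exact ih.tightLink hbi hef
  obtain ⟨k', hwalk, -⟩ := hproj _ htight
  exact ⟨k', hwalk⟩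

lemma activelyConnected_latentProj_iff (hbi : ∀ u v, ¬ G.bi u v) {a c : V} :
    (latentProj G).ActivelyConnected B a c ↔ G.ActivelyConnected (inl '' B) (inl a) (inl c) :=
  ⟨.of_latentProj, .latentProj hbi⟩

end MixedGraph

theorem stmt4_general {V L : Type*}
    (G : MixedGraph (V ⊕ L)) (hbi : ∀ u v, ¬ G.bi u v)
    (A B C : Set V) (hAB : Disjoint A B) :
    G.MSep (Sum.inl '' A) (Sum.inl '' C) (Sum.inl '' B) ↔
      (latentProj G).MSep A C B := by
  rw [MixedGraph.msep_iff_forall_not_activelyConnected hAB,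
    MixedGraph.msep_iff_forall_not_activelyConnected
      ((Set.disjoint_image_iff Sum.inl_injective).2 hAB)]
  simp only [Set.forall_mem_image, MixedGraph.activelyConnected_latentProj_iff hbi]

/-- d-separation in a DAG over `V ⊕ L` of sets of observed nodes is
equivalent to m-separation in the latent projection onto `V`. -/
theorem stmt4 {V L : Type*} [Fintype V] [Fintype L]
    (G : MixedGraph (V ⊕ L)) (hacyc : G.Acyclic) (hbi : ∀ u v, ¬ G.bi u v)
    (A B C : Set V) (hAB : Disjoint A B) (hAC : Disjoint A C) (hBC : Disjoint B C) :
    G.MSep (Sum.inl '' A) (Sum.inl '' C) (Sum.inl '' B) ↔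
      (latentProj G).MSep A C B :=
  stmt4_general G hbi A B C hAB
end

section
/- Let G_I be the full-time DAG of a VAR(p) process with instantaneous effects and G_II the full-time DAG of its distributionally equivalent representation without instantaneous effects (obtained by multiplying by (I − A₀)^{-1}). Then for every node S_t^i, the ancestor set of S_t^i in G_II is contained in the ancestor set of S_t^i in G_I. -/
/-- for a VAR(p) process with instantaneous effects (coefficients
`A 0, …, A p`, `A 0` strictly lower triangular), every ancestor of a node
`S_t^i` in the full-time DAG of the rewritten process without instantaneous
effects (coefficients `(I − A 0)⁻¹ * A k`, `k ≥ 1`) is an ancestor of that node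
in the original full-time DAG.  Nodes are pairs `(t, i) : ℤ × Fin d`, and there
is an edge `(s, j) → (t, i)` at lag `k = t − s` iff the `(i,j)` entry of the
lag-`k` coefficient matrix is nonzero. -/
theorem stmt10 {d : ℕ} (p : ℕ) (A : ℕ → Matrix (Fin d) (Fin d) ℝ)
    (hA0 : ∀ i j : Fin d, i ≤ j → A 0 i j = 0) :
    ∀ u v : ℤ × Fin d,
      Relation.ReflTransGen
        (fun a b : ℤ × Fin d => ∃ k : ℕ, 1 ≤ k ∧ k ≤ p ∧ b.1 - a.1 = (k : ℤ) ∧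
          ((1 - A 0)⁻¹ * A k) b.2 a.2 ≠ 0) u v →
      Relation.ReflTransGen
        (fun a b : ℤ × Fin d => ∃ k : ℕ, k ≤ p ∧ b.1 - a.1 = (k : ℤ) ∧
          A k b.2 a.2 ≠ 0) u v := by
  set RI : ℤ × Fin d → ℤ × Fin d → Prop := fun a b =>
    ∃ k : ℕ, k ≤ p ∧ b.1 - a.1 = (k : ℤ) ∧ A k b.2 a.2 ≠ 0 with hRI
  -- entries of powers of A 0 respect the strict triangular structure
  have hpow : ∀ m : ℕ, ∀ i j : Fin d, (A 0 ^ m) i j ≠ 0 → (j : ℕ) + m ≤ (i : ℕ) := by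
    intro m
    induction m with
    | zero =>
      intro i j h
      rw [pow_zero] at h
      by_cases hij : i = j
      · omega
      · exact absurd (Matrix.one_apply_ne hij) h
    | succ m ih =>
      intro i j h
      rw [pow_succ, Matrix.mul_apply] at h
      obtain ⟨l, -, hl⟩ := Finset.exists_ne_zero_of_sum_ne_zero h
      have h1 : (A 0 ^ m) i l ≠ 0 := fun hz => hl (by rw [hz, zero_mul])
      have h2 : A 0 l j ≠ 0 := fun hz => hl (by rw [hz, mul_zero])
      have hlj : (j : ℕ) < (l : ℕ) := by
        by_contra hc
        exact h2 (hA0 l j (by exact Fin.le_def.mpr (by omega)))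
      have := ih i l h1
      omega
  -- A 0 is nilpotent
  have hnil : A 0 ^ d = 0 := by
    ext i j
    by_contra h
    have := hpow d i j h
    have := j.isLt
    have := i.isLt
    omega
  -- geometric series is a left inverse of 1 - A 0
  have hS : (∑ m ∈ Finset.range d, A 0 ^ m) * (1 - A 0) = 1 := by
    have := geom_sum_mul (A 0) d
    rw [hnil] at this
    rw [← neg_sub (A 0) 1, mul_neg, this]
    simp
  have hinv : (1 - A 0)⁻¹ = ∑ m ∈ Finset.range d, A 0 ^ m :=
    Matrix.inv_eq_left_inv hS
  -- paths in G_I from powers of A 0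
  have hpath : ∀ m : ℕ, ∀ (t : ℤ) (i j : Fin d), (A 0 ^ m) i j ≠ 0 →
      Relation.ReflTransGen RI (t, j) (t, i) := by
    intro m
    induction m with
    | zero =>
      intro t i j h
      rw [pow_zero] at h
      by_cases hij : i = j
      · subst hij; exact Relation.ReflTransGen.refl
      · exact absurd (Matrix.one_apply_ne hij) h
    | succ m ih =>
      intro t i j h
      rw [pow_succ, Matrix.mul_apply] at h
      obtain ⟨l, -, hl⟩ := Finset.exists_ne_zero_of_sum_ne_zero h
      have h1 : (A 0 ^ m) i l ≠ 0 := fun hz => hl (by rw [hz, zero_mul])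
      have h2 : A 0 l j ≠ 0 := fun hz => hl (by rw [hz, mul_zero])
      have step : RI (t, j) (t, l) := ⟨0, Nat.zero_le p, by simp, h2⟩
      exact Relation.ReflTransGen.trans (Relation.ReflTransGen.single step) (ih t i l h1)
  -- paths in G_I from the inverse matrix
  have hinvpath : ∀ (t : ℤ) (i j : Fin d), (1 - A 0)⁻¹ i j ≠ 0 →
      Relation.ReflTransGen RI (t, j) (t, i) := by
    intro t i j h
    rw [hinv] at h
    have h' : (∑ m ∈ Finset.range d, (A 0 ^ m) i j) ≠ 0 := by
      simpa [Matrix.sum_apply] using h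
    obtain ⟨m, -, hm⟩ := Finset.exists_ne_zero_of_sum_ne_zero h'
    exact hpath m t i j hm
  -- main induction on the path in G_II
  intro u v huv
  induction huv with
  | refl => exact Relation.ReflTransGen.refl
  | tail hab hedge ih =>
    rename_i b c
    obtain ⟨k, hk1, hkp, hkt, hne⟩ := hedge
    rw [Matrix.mul_apply] at hne
    obtain ⟨l, -, hl⟩ := Finset.exists_ne_zero_of_sum_ne_zero hne
    have h1 : (1 - A 0)⁻¹ c.2 l ≠ 0 := fun hz => hl (by rw [hz, zero_mul])
    have h2 : A k l b.2 ≠ 0 := fun hz => hl (by rw [hz, mul_zero])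
    have step : RI b (c.1, l) := ⟨k, hkp, hkt, h2⟩
    have tail : Relation.ReflTransGen RI (c.1, l) (c.1, c.2) := hinvpath c.1 c.2 l h1
    exact Relation.ReflTransGen.trans ih
      (Relation.ReflTransGen.trans (Relation.ReflTransGen.single step) tail)
end

section
/- Let f : U → ℝ be a real analytic function on a nonempty open connected set U ⊆ ℝ^n, and suppose f is not identically zero. Then the zero set {x ∈ U : f(x) = 0} has Lebesgue measure zero. Consequently, if μ is a probability measure on U absolutely continuous with respect to Lebesgue measure, then μ({f = 0}) = 0. -/
open MeasureTheory Filter Topology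

local notation "⟪" x ", " y "⟫" => @inner ℝ _ _ x y

theorem oneDim {g : ℝ → ℝ} {I : Set ℝ} (hIc : IsPreconnected I)
    (hg : AnalyticOnNhd ℝ g I) {t₁ : ℝ} (ht₁ : t₁ ∈ I) (hgt₁ : g t₁ ≠ 0) :
    volume {t ∈ I | g t = 0} = 0 := by
  apply measure_null_of_locally_null
  intro t ht
  obtain ⟨htI, hgt⟩ := ht
  rcases (hg t htI).eventually_eq_zero_or_eventually_ne_zero with h | h
  · exact absurd (hg.eqOn_zero_of_preconnected_of_eventuallyEq_zero hIc htI h ht₁) hgt₁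
  · refine ⟨{t}, ?_, measure_singleton t⟩
    have h' : ∀ᶠ z in 𝓝[{t ∈ I | g t = 0}] t, z ≠ t → g z ≠ 0 := by
      apply Filter.Eventually.filter_mono (nhdsWithin_le_nhds)
      simpa [eventually_nhdsWithin_iff] using h
    have h'' : ∀ᶠ z in 𝓝[{t ∈ I | g t = 0}] t, z ∈ {t ∈ I | g t = 0} :=
      self_mem_nhdsWithin
    filter_upwards [h', h''] with z hz hz2
    by_contra hc
    exact hz (by simpa using hc) hz2.2

set_option synthInstance.maxHeartbeats 1000000 in
set_option maxHeartbeats 1000000 in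
theorem localNull {n : ℕ} {f : EuclideanSpace ℝ (Fin n) → ℝ}
    {x : EuclideanSpace ℝ (Fin n)} {r : ℝ} (hr : 0 < r)
    (hf : AnalyticOnNhd ℝ f (Metric.ball x r)) (hnev : ¬ (f =ᶠ[𝓝 x] 0)) :
    ∃ V ∈ 𝓝 x, volume {y ∈ V | f y = 0} = 0 := by
  classical
  by_cases hfx : f x = 0
  swap
  · -- f x ≠ 0 : take the open set where f ≠ 0 inside the ball
    have hopen : IsOpen {y ∈ Metric.ball x r | f y ≠ 0} := by
      have h := hf.continuousOn.isOpen_inter_preimage Metric.isOpen_ball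
        (isOpen_compl_singleton : IsOpen ({(0:ℝ)}ᶜ))
      have heq : Metric.ball x r ∩ f ⁻¹' {(0:ℝ)}ᶜ = {y ∈ Metric.ball x r | f y ≠ 0} := by
        ext z; simp [Set.mem_inter_iff]
      rwa [heq] at h
    refine ⟨_, hopen.mem_nhds ⟨Metric.mem_ball_self hr, hfx⟩, ?_⟩
    convert measure_empty (μ := (volume : Measure (EuclideanSpace ℝ (Fin n))))
    ext z; simp only [Set.mem_setOf_eq, Set.mem_empty_iff_false, iff_false, not_and]
    rintro ⟨-, hz⟩; exact hz
  -- main case : f x = 0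
  have hfreq : ∃ᶠ y in 𝓝 x, f y ≠ 0 := by
    simpa [Filter.not_eventually, Filter.EventuallyEq] using hnev
  obtain ⟨y, hyne, hyball⟩ :=
    (hfreq.and_eventually (Metric.ball_mem_nhds x (by positivity : (0:ℝ) < r/4))).exists
  set v : EuclideanSpace ℝ (Fin n) := y - x with hv_def
  have hv : v ≠ 0 := by
    intro h0
    apply hyne
    have : y = x := by rwa [hv_def, sub_eq_zero] at h0
    rw [this, hfx]
  have hvnorm : ‖v‖ < r / 4 := by
    have := Metric.mem_ball.mp hyball
    rwa [dist_eq_norm] at this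
  have hvv : (⟪v, v⟫) ≠ 0 := inner_self_ne_zero.mpr hv
  set K := (ℝ ∙ v)ᗮ
  -- the linear equivalence  K × ℝ ≃ E, (w, t) ↦ w + t • v
  set L : (K × ℝ) →ₗ[ℝ] EuclideanSpace ℝ (Fin n) :=
    LinearMap.coprod K.subtype (LinearMap.toSpanSingleton ℝ (EuclideanSpace ℝ (Fin n)) v) with hL_def
  have hLapp : ∀ w : K, ∀ t : ℝ, L (w, t) = (w : EuclideanSpace ℝ (Fin n)) + t • v := fun w t => rfl
  have hbij : Function.Bijective L := by
    constructor
    · rw [injective_iff_map_eq_zero]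
      rintro ⟨w, t⟩ h0
      rw [hLapp] at h0
      have hw : (⟪v, (w : EuclideanSpace ℝ (Fin n))⟫) = 0 :=
        Submodule.mem_orthogonal_singleton_iff_inner_right.mp w.2
      have ht : t = 0 := by
        have := congrArg (fun z => ⟪v, z⟫) h0
        simp only [inner_add_right, real_inner_smul_right, hw, inner_zero_right,
          zero_add] at this
        exact (mul_eq_zero.mp this).resolve_right hvv
      have hw0 : (w : EuclideanSpace ℝ (Fin n)) = 0 := by
        rw [ht, zero_smul, add_zero] at h0
        exact h0
      exact Prod.ext (Subtype.ext hw0) ht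
    · intro z
      set c := ⟪v, z⟫ / ⟪v, v⟫ with hc
      have hmem : z - c • v ∈ K := by
        rw [Submodule.mem_orthogonal_singleton_iff_inner_right]
        rw [inner_sub_right, real_inner_smul_right, hc]
        rw [div_mul_cancel₀ _ hvv, sub_self]
      exact ⟨(⟨z - c • v, hmem⟩, c), by rw [hLapp]; simp⟩
  set e : (K × ℝ)  ≃ₗ[ℝ] EuclideanSpace ℝ (Fin n) := LinearEquiv.ofBijective L hbij with he_def
  set Φ : (K × ℝ)  ≃L[ℝ] EuclideanSpace ℝ (Fin n) := e.toContinuousLinearEquiv with hΦ_def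
  have hΦapp : ∀ w : K, ∀ t : ℝ, Φ (w, t) = (w : EuclideanSpace ℝ (Fin n)) + t • v := fun w t => hLapp w t
  set w₀ : K := (Φ.symm x).1 with hw₀
  set t₀ : ℝ := (Φ.symm x).2 with ht₀
  have hx0 : (w₀ : EuclideanSpace ℝ (Fin n)) + t₀ • v = x := by
    rw [← hΦapp]
    exact Φ.apply_symm_apply x
  have hy0 : (w₀ : EuclideanSpace ℝ (Fin n)) + (t₀ + 1) • v = y := by
    rw [add_smul, one_smul, ← add_assoc, hx0, hv_def]
    abel
  -- choose δ so that f ≠ 0 at (w, t₀+1) for w near w₀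
  have hyball' : y ∈ Metric.ball x r := by
    rw [Metric.mem_ball, dist_eq_norm, ← hv_def]
    linarith
  have hGcont : ContinuousAt (fun w : K => f ((w : EuclideanSpace ℝ (Fin n)) + (t₀ + 1) • v)) w₀ := by
    apply ContinuousAt.comp
    · rw [hy0]; exact (hf y hyball').continuousAt
    · exact (continuous_subtype_val.add continuous_const).continuousAt
  have hGne : ∀ᶠ w : K in 𝓝 w₀, f ((w : EuclideanSpace ℝ (Fin n)) + (t₀ + 1) • v) ≠ 0 := by
    apply hGcont.eventually_ne
    rw [hy0]; exact hyne
  obtain ⟨δ₀, hδ₀, hδ₀ne⟩ := Metric.eventually_nhds_iff_ball.mp hGne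
  set δ : ℝ := min δ₀ (r / 4) with hδ_def
  have hδpos : 0 < δ := lt_min hδ₀ (by positivity)
  set W : Set K := Metric.ball w₀ δ with hW_def
  set I : Set ℝ := Set.Ioo (t₀ - 2) (t₀ + 2) with hI_def
  -- key: the image box lies in the ball of analyticity
  have hbox : ∀ w ∈ W, ∀ t ∈ I, (w : EuclideanSpace ℝ (Fin n)) + t • v ∈ Metric.ball x r := by
    intro w hw t ht
    rw [Metric.mem_ball, dist_eq_norm]
    have h1 : (w : EuclideanSpace ℝ (Fin n)) + t • v - x = ((w : EuclideanSpace ℝ (Fin n)) - (w₀ : EuclideanSpace ℝ (Fin n))) + (t - t₀) • v := by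
      rw [← hx0, sub_smul]; abel
    have h2 : ‖(w : EuclideanSpace ℝ (Fin n)) - (w₀ : EuclideanSpace ℝ (Fin n))‖ < δ := by
      have := Metric.mem_ball.mp hw
      rw [dist_eq_norm] at this
      exact_mod_cast this
    have h3 : |t - t₀| < 2 := by
      rw [abs_lt]; exact ⟨by linarith [ht.1], by linarith [ht.2]⟩
    calc ‖(w : EuclideanSpace ℝ (Fin n)) + t • v - x‖ = ‖((w : EuclideanSpace ℝ (Fin n)) - (w₀ : EuclideanSpace ℝ (Fin n))) + (t - t₀) • v‖ := by rw [h1]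
      _ ≤ ‖(w : EuclideanSpace ℝ (Fin n)) - (w₀ : EuclideanSpace ℝ (Fin n))‖ + ‖(t - t₀) • v‖ := norm_add_le _ _
      _ = ‖(w : EuclideanSpace ℝ (Fin n)) - (w₀ : EuclideanSpace ℝ (Fin n))‖ + |t - t₀| * ‖v‖ := by rw [norm_smul, Real.norm_eq_abs]
      _ < δ + 2 * (r / 4) := by
          have : |t - t₀| * ‖v‖ ≤ 2 * ‖v‖ := by
            apply mul_le_mul_of_nonneg_right h3.le (norm_nonneg _)
          have h4 : 2 * ‖v‖ < 2 * (r / 4) := by linarith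
          linarith
      _ ≤ r / 4 + r / 2 := by
          have : δ ≤ r / 4 := min_le_right _ _
          linarith
      _ < r := by linarith
  set V : Set (EuclideanSpace ℝ (Fin n)) := Φ '' (W ×ˢ I) with hV_def
  have hVopen : IsOpen V := Φ.toHomeomorph.isOpenMap _ (Metric.isOpen_ball.prod isOpen_Ioo)
  have hxV : x ∈ V := by
    refine ⟨(w₀, t₀), ⟨Metric.mem_ball_self hδpos, ?_⟩, by rw [hΦapp]; exact hx0⟩
    exact ⟨by linarith, by linarith⟩
  have hVball : V ⊆ Metric.ball x r := by
    rintro z ⟨⟨w, t⟩, ⟨hw, ht⟩, rfl⟩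
    rw [hΦapp]
    exact hbox w hw t ht
  refine ⟨V, hVopen.mem_nhds hxV, ?_⟩
  -- measurability of the zero set
  set S : Set (EuclideanSpace ℝ (Fin n)) := {y ∈ V | f y = 0} with hS_def
  have hNopen : IsOpen {y ∈ Metric.ball x r | f y ≠ 0} := by
    have h := hf.continuousOn.isOpen_inter_preimage Metric.isOpen_ball
      (isOpen_compl_singleton : IsOpen ({(0:ℝ)}ᶜ))
    have heq : Metric.ball x r ∩ f ⁻¹' {(0:ℝ)}ᶜ = {y ∈ Metric.ball x r | f y ≠ 0} := by
      ext z; simp [Set.mem_inter_iff]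
    rwa [heq] at h
  have hSdiff : S = V \ {y ∈ Metric.ball x r | f y ≠ 0} := by
    ext z
    simp only [hS_def, Set.mem_setOf_eq, Set.mem_diff]
    constructor
    · rintro ⟨hzV, hz0⟩
      exact ⟨hzV, fun h => h.2 hz0⟩
    · rintro ⟨hzV, hz⟩
      refine ⟨hzV, ?_⟩
      by_contra h
      exact hz ⟨hVball hzV, h⟩
  have hSmeas : MeasurableSet S := by
    rw [hSdiff]
    exact hVopen.measurableSet.diff hNopen.measurableSet
  -- transfer to K × ℝ via the Haar property
  haveI hmk : Measure.IsAddHaarMeasure (volume : Measure (K × ℝ)) := by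
    rw [Measure.volume_eq_prod]; infer_instance
  have hHaar : (volume : Measure (EuclideanSpace ℝ (Fin n))) =
      Measure.addHaarScalarFactor (volume : Measure (EuclideanSpace ℝ (Fin n))) ((volume : Measure (K × ℝ)).map Φ) •
        ((volume : Measure (K × ℝ)).map Φ) :=
    Measure.isAddLeftInvariant_eq_smul _ _
  rw [hHaar]
  simp only [Measure.smul_apply, smul_eq_mul]
  have hmap : ((volume : Measure (K × ℝ)).map Φ) S = volume (⇑Φ ⁻¹' S) :=
    Measure.map_apply Φ.continuous.measurable hSmeas
  rw [hmap]
  -- Fubini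
  have hPmeas : MeasurableSet (⇑Φ ⁻¹' S) := Φ.continuous.measurable hSmeas
  have hslice : ∀ w : K, volume (Prod.mk w ⁻¹' (⇑Φ ⁻¹' S)) = 0 := by
    intro w
    by_cases hw : w ∈ W
    · have hz0 : volume {t ∈ I | f ((w : EuclideanSpace ℝ (Fin n)) + t • v) = 0} = 0 := by
        apply oneDim isPreconnected_Ioo _ (Set.mem_Ioo.mpr ⟨by linarith, by linarith⟩)
          (hδ₀ne w (Metric.ball_subset_ball (min_le_left _ _) hw))
        intro t ht
        have hmem := hbox w hw t ht
        have hin : AnalyticAt ℝ (fun s : ℝ => (w : EuclideanSpace ℝ (Fin n)) + s • v) t := by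
          apply AnalyticAt.add analyticAt_const
          exact (ContinuousLinearMap.toSpanSingleton ℝ v).analyticAt t
        exact (AnalyticAt.comp (hf _ hmem) hin :
          AnalyticAt ℝ (f ∘ fun s : ℝ => (w : EuclideanSpace ℝ (Fin n)) + s • v) t)
      apply measure_mono_null _ hz0
      · intro t ht
        simp only [Set.mem_preimage, hS_def, Set.mem_setOf_eq] at ht
        obtain ⟨htV, ht0⟩ := ht
        have htI : (w, t) ∈ W ×ˢ I := by
          obtain ⟨p, hmem, heq⟩ := htV
          have hpt : p = (w, t) := Φ.injective heq
          rwa [hpt] at hmem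
        refine ⟨htI.2, ?_⟩
        rwa [hΦapp] at ht0
    · have : Prod.mk w ⁻¹' (⇑Φ ⁻¹' S) = ∅ := by
        ext t
        simp only [Set.mem_preimage, hS_def, Set.mem_setOf_eq, Set.mem_empty_iff_false,
          iff_false, not_and]
        intro htV
        exfalso
        obtain ⟨p, hmem, heq⟩ := htV
        have hpt : p = (w, t) := Φ.injective heq
        rw [hpt] at hmem
        exact hw hmem.1
      rw [this, measure_empty]
  have : (volume : Measure (K × ℝ)) (⇑Φ ⁻¹' S) = 0 := by
    rw [Measure.volume_eq_prod]
    rw [Measure.measure_prod_null hPmeas]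
    exact Filter.Eventually.of_forall hslice
  rw [this]
  simp


/-- the zero set of a real analytic function on a nonempty open
connected subset of ℝⁿ that is not identically zero has Lebesgue measure zero;
hence it is null for every probability measure absolutely continuous with
respect to Lebesgue measure. -/
theorem stmt12 {n : ℕ} (f : EuclideanSpace ℝ (Fin n) → ℝ)
    (U : Set (EuclideanSpace ℝ (Fin n)))
    (hU : IsOpen U) (hconn : IsConnected U)
    (hf : AnalyticOnNhd ℝ f U) (hne : ∃ x ∈ U, f x ≠ 0) :
    volume {x ∈ U | f x = 0} = 0 ∧
      ∀ μ : Measure (EuclideanSpace ℝ (Fin n)), IsProbabilityMeasure μ →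
        μ ≪ volume → μ {x ∈ U | f x = 0} = 0 := by
  have hZ : volume {x ∈ U | f x = 0} = 0 := by
    apply measure_null_of_locally_null
    intro x hx
    obtain ⟨hxU, hfx⟩ := hx
    have hnev : ¬ (f =ᶠ[𝓝 x] 0) := by
      intro h
      obtain ⟨z, hzU, hz⟩ := hne
      exact hz (hf.eqOn_zero_of_preconnected_of_eventuallyEq_zero
        hconn.isPreconnected hxU h hzU)
    obtain ⟨r, hr, hball⟩ := Metric.isOpen_iff.mp hU x hxU
    obtain ⟨V, hV, hV0⟩ := localNull hr (hf.mono hball) hnev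
    refine ⟨{y ∈ V | f y = 0}, ?_, hV0⟩
    have hVin : V ∈ 𝓝[{x ∈ U | f x = 0}] x := nhdsWithin_le_nhds hV
    refine Filter.mem_of_superset (Filter.inter_mem hVin self_mem_nhdsWithin) ?_
    rintro z ⟨hzV, hzZ⟩
    exact ⟨hzV, hzZ.2⟩
  exact ⟨hZ, fun μ _ hac => hac hZ⟩
end

section
/- Let G be an ADMG over nodes V, A and C disjoint node sets m-separated by B, and let G' be the subgraph of G induced on V \ {λ} for some λ ∈ B. Then A and C are m-separated by B \ {λ} in G'. -/
/-!
A path of the subgraph induced on `W` is a path of `G` all of whose vertices lie in `W`, and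
descent in the subgraph implies descent in `G`. Hence whatever vertex blocks the path in `G`
relative to `B` also blocks it in the subgraph relative to `B ∩ W`; for `W = {λ}ᶜ` this is
`B \ {λ}`.
-/

namespace MixedGraph

variable {V : Type*} {G : MixedGraph V} {W : Set V}

theorem stepOK_of_restrict_stepOK {u v : V} {k : StepKind}
    (h : (G.restrict W).stepOK u v k) : G.stepOK u v k := by
  cases k <;> exact h.1

theorem left_mem_of_restrict_stepOK {u v : V} {k : StepKind}
    (h : (G.restrict W).stepOK u v k) : u ∈ W := by
  cases k
  · exact h.2.1
  · exact h.2.2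
  · exact h.2.1

theorem descends.of_restrict {u v : V} (h : (G.restrict W).descends u v) : G.descends u v :=
  Relation.ReflTransGen.mono (fun _ _ huv => huv.1) _ _ h

def Path.ofRestrict (p : (G.restrict W).Path) : G.Path :=
  { p with ok := fun i => stepOK_of_restrict_stepOK (p.ok i) }

theorem Path.verts_castSucc_mem (p : (G.restrict W).Path) (i : Fin p.n) :
    p.verts i.castSucc ∈ W :=
  left_mem_of_restrict_stepOK (p.ok i)

theorem Blocked.of_ofRestrict {p : (G.restrict W).Path} {B : Set V}
    (h : G.Blocked p.ofRestrict B) : (G.restrict W).Blocked p (B ∩ W) := by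
  obtain ⟨j, hj, ⟨hnc, hB⟩ | ⟨hc, hdesc⟩⟩ := h
  · exact ⟨j, hj, Or.inl ⟨hnc, hB, p.verts_castSucc_mem j⟩⟩
  · exact ⟨j, hj, Or.inr ⟨hc, fun w hw hd => hdesc w hw.1 hd.of_restrict⟩⟩

theorem MSep.restrict {A B C : Set V} (h : G.MSep A C B) (W : Set V) :
    (G.restrict W).MSep A C (B ∩ W) :=
  fun p hA hC => (h p.ofRestrict hA hC).of_ofRestrict

end MixedGraph

theorem stmt19_general {V : Type*} (G : MixedGraph V)
    (A B C : Set V)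
    (hsep : G.MSep A C B)
    (lam : V) :
    (G.restrict {lam}ᶜ).MSep A C (B \ {lam}) := by
  rw [Set.sdiff_eq]
  exact hsep.restrict _

/-- removing a node `λ` of the conditioning set from the graph
preserves m-separation with conditioning set `B \ {λ}`. -/
theorem stmt19 {V : Type*} (G : MixedGraph V) (hacyc : G.Acyclic)
    (A B C : Set V)
    (hAB : Disjoint A B) (hAC : Disjoint A C) (hBC : Disjoint B C)
    (hsep : G.MSep A C B)
    (lam : V) (hlam : lam ∈ B) :
    (G.restrict {lam}ᶜ).MSep A C (B \ {lam}) :=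
  stmt19_general G A B C hsep lam
end
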